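/- arXiv:2406.00139 — 7 statements merged into one kernel-verified Lean document; each statement's English description precedes it below -/
import Mathlib

section
/- For all n ≥ 2, the number of partitions of n with odd parts distinct, even parts unrestricted, and all odd parts greater than all even parts, is strictly less than the number of partitions of n with even parts distinct, odd parts unrestricted, and all even parts greater than all odd parts. -/
/-- Every odd part is greater than every even part. -/
def oddAbove (l : Multiset ℕ) : Prop :=
  ∀ a ∈ l, ∀ b ∈ l, Odd a → Even b → b < a

/-- Every even part is greater than every odd part. -/
def evenAbove (l : Multiset ℕ) : Prop :=
  ∀ a ∈ l, ∀ b ∈ l, Even a → Odd b → b < a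

/-- The odd parts are distinct. -/
def oddDistinct (l : Multiset ℕ) : Prop :=
  ∀ a, Odd a → l.count a ≤ 1

/-- The even parts are distinct. -/
def evenDistinct (l : Multiset ℕ) : Prop :=
  ∀ a, Even a → l.count a ≤ 1

/-- The number of partitions of `n` whose multiset of parts satisfies `P`. -/
noncomputable def pcount (n : ℕ) (P : Multiset ℕ → Prop) : ℕ :=
  Nat.card {p : Nat.Partition n // P p.parts}

/-!
Remove the first column of the Young diagram and reinsert it as parts equal to `1`: every part
`x` becomes `x - 1` (zeros dropped) and `card l` ones are added. Lowering by one swaps parities,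
so distinct odd parts lying above the even parts become distinct even parts lying above the odd
parts, and the new ones are odd and smallest. Since a partition of the first kind has at most one
part `1`, the image determines the partition. The image always contains a `1`, so the
one-part partition `{n}` (with `n ≥ 2`) is missed.
-/

open Multiset

def firstColumnToOnes (l : Multiset ℕ) : Multiset ℕ :=
  (l.map (· - 1)).filter (0 < ·) + replicate (card l) 1

lemma mem_firstColumnToOnes {l : Multiset ℕ} {a : ℕ} :
    a ∈ firstColumnToOnes l ↔ (0 < a ∧ a + 1 ∈ l) ∨ (l ≠ 0 ∧ a = 1) := by
  simp only [firstColumnToOnes, mem_add, mem_filter, mem_map, mem_replicate, ne_eq,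
    card_eq_zero]
  constructor
  · rintro (⟨⟨x, hx, rfl⟩, hpos⟩ | h)
    · exact .inl ⟨hpos, by rwa [Nat.sub_add_cancel (by omega)]⟩
    · exact .inr h
  · rintro (⟨hpos, hmem⟩ | h)
    · exact .inl ⟨⟨a + 1, hmem, rfl⟩, hpos⟩
    · exact .inr h

lemma pos_of_mem_firstColumnToOnes {l : Multiset ℕ} {a : ℕ} (h : a ∈ firstColumnToOnes l) :
    0 < a := by
  rcases mem_firstColumnToOnes.mp h with h | h <;> omega

lemma sum_firstColumnToOnes {l : Multiset ℕ} (hl : ∀ x ∈ l, 0 < x) :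
    (firstColumnToOnes l).sum = l.sum := by
  induction l using Multiset.induction with
  | empty => simp [firstColumnToOnes]
  | cons x s ih =>
    have hx := hl x (mem_cons_self x s)
    have := ih fun y hy => hl y (mem_cons_of_mem hy)
    simp only [firstColumnToOnes, map_cons, filter_cons, card_cons, replicate_succ, sum_add,
      sum_cons, sum_replicate, smul_eq_mul] at this ⊢
    split_ifs <;> simp <;> omega

lemma card_firstColumnToOnes {l : Multiset ℕ} (hl : ∀ x ∈ l, 0 < x) :
    card (firstColumnToOnes l) + count 1 l = 2 * card l := by
  induction l using Multiset.induction with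
  | empty => simp [firstColumnToOnes]
  | cons x s ih =>
    have hx := hl x (mem_cons_self x s)
    have := ih fun y hy => hl y (mem_cons_of_mem hy)
    simp only [firstColumnToOnes, map_cons, filter_cons, card_cons, card_add, card_replicate,
      count_cons] at this ⊢
    split_ifs <;> simp <;> omega

lemma count_map_sub_one (l : Multiset ℕ) {a : ℕ} (ha : 0 < a) :
    count a (l.map (· - 1)) = count (a + 1) l := by
  induction l using Multiset.induction with
  | empty => simp
  | cons x s ih =>
    simp only [map_cons, count_cons, ih]
    split_ifs <;> omega

lemma count_one_firstColumnToOnes (l : Multiset ℕ) :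
    count 1 (firstColumnToOnes l) = count 2 l + card l := by
  simp [firstColumnToOnes, count_map_sub_one]

lemma count_firstColumnToOnes_of_two_le (l : Multiset ℕ) {a : ℕ} (ha : 2 ≤ a) :
    count a (firstColumnToOnes l) = count (a + 1) l := by
  simp [firstColumnToOnes, count_replicate, count_map_sub_one l (a := a) (by omega),
    show 0 < a by omega, show 1 ≠ a by omega]

lemma eq_of_firstColumnToOnes_eq {l₁ l₂ : Multiset ℕ} (h₁ : ∀ x ∈ l₁, 0 < x)
    (h₂ : ∀ x ∈ l₂, 0 < x) (d₁ : count 1 l₁ ≤ 1) (d₂ : count 1 l₂ ≤ 1)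
    (he : firstColumnToOnes l₁ = firstColumnToOnes l₂) : l₁ = l₂ := by
  have hcard₁ := card_firstColumnToOnes h₁
  have hcard₂ := card_firstColumnToOnes h₂
  have hone₁ := count_one_firstColumnToOnes l₁
  have hone₂ := count_one_firstColumnToOnes l₂
  rw [he] at hcard₁ hone₁
  -- `count 1 lᵢ ≤ 1` is the parity of `card (firstColumnToOnes lᵢ)`, which then fixes `card lᵢ`
  -- and `count 2 lᵢ`; larger parts are read off directly.
  ext a
  match a with
  | 0 => rw [count_eq_zero.mpr fun h => (h₁ 0 h).false, count_eq_zero.mpr fun h => (h₂ 0 h).false]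
  | 1 => omega
  | 2 => omega
  | a + 3 =>
    rw [← count_firstColumnToOnes_of_two_le l₁ (a := a + 2) (by omega), he,
      count_firstColumnToOnes_of_two_le l₂ (by omega)]

lemma evenDistinct_firstColumnToOnes {l : Multiset ℕ} (h : oddDistinct l) :
    evenDistinct (firstColumnToOnes l) := by
  intro a ha
  obtain rfl | h2 : a = 0 ∨ 2 ≤ a := by rcases ha with ⟨k, rfl⟩; omega
  · rw [count_eq_zero.mpr fun h => (pos_of_mem_firstColumnToOnes h).false]
    omega
  · rw [count_firstColumnToOnes_of_two_le l h2]
    exact h (a + 1) ha.add_one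

lemma evenAbove_firstColumnToOnes {l : Multiset ℕ} (h : oddAbove l) :
    evenAbove (firstColumnToOnes l) := by
  intro a ha b hb hae hbo
  rcases mem_firstColumnToOnes.mp ha with ⟨ha0, ha⟩ | ⟨-, rfl⟩
  · rcases mem_firstColumnToOnes.mp hb with ⟨-, hb⟩ | ⟨-, rfl⟩
    · have := h _ ha _ hb hae.add_one hbo.add_one
      omega
    · rcases hae with ⟨k, hk⟩; omega
  · exact absurd hae (by decide)

lemma evenDistinct_singleton (n : ℕ) : evenDistinct {n} := fun a _ => by
  rw [count_singleton]
  split_ifs <;> omega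

lemma evenAbove_singleton (n : ℕ) : evenAbove {n} := by
  intro a ha b hb hae hbo
  rw [mem_singleton] at ha hb
  subst ha hb
  exact absurd hae (Nat.not_even_iff_odd.mpr hbo)

def Nat.Partition.firstColumnToOnes {n : ℕ} (p : n.Partition) : n.Partition where
  parts := _root_.firstColumnToOnes p.parts
  parts_pos := pos_of_mem_firstColumnToOnes
  parts_sum := (sum_firstColumnToOnes fun _ => p.parts_pos).trans p.parts_sum

theorem stmt4 (n : ℕ) (hn : 2 ≤ n) :
    pcount n (fun l => oddDistinct l ∧ oddAbove l) <
      pcount n (fun l => evenDistinct l ∧ evenAbove l) := by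
  classical
  let Φ : {p : n.Partition // oddDistinct p.parts ∧ oddAbove p.parts} →
      {p : n.Partition // evenDistinct p.parts ∧ evenAbove p.parts} := fun p =>
    ⟨p.1.firstColumnToOnes, evenDistinct_firstColumnToOnes p.2.1,
      evenAbove_firstColumnToOnes p.2.2⟩
  have hΦ : Function.Injective Φ := fun p q h =>
    Subtype.ext <| Nat.Partition.ext <| eq_of_firstColumnToOnes_eq
      (fun _ => p.1.parts_pos) (fun _ => q.1.parts_pos) (p.2.1 1 odd_one) (q.2.1 1 odd_one)
      (congrArg (fun r => r.1.parts) h)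
  have hn0 : n ≠ 0 := by omega
  have hsingle : ⟨Nat.Partition.indiscrete n, by
      rw [Nat.Partition.indiscrete_parts hn0]
      exact ⟨evenDistinct_singleton n, evenAbove_singleton n⟩⟩ ∉ Set.range Φ := by
    rintro ⟨p, hp⟩
    have h1 : 1 ∈ (Φ p).1.parts := mem_firstColumnToOnes.mpr
      (.inr ⟨fun h => hn0 (by rw [← p.1.parts_sum, h, sum_zero]), rfl⟩)
    rw [hp, Nat.Partition.indiscrete_parts hn0, mem_singleton] at h1
    omega
  unfold pcount
  rw [Nat.card_eq_fintype_card, Nat.card_eq_fintype_card]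
  exact Fintype.card_lt_of_injective_of_notMem Φ hΦ hsingle
end

section
/- For all n ≥ 2, the number of partitions of n with all parts distinct in which every odd part exceeds every even part is strictly less than the number of partitions of n with even parts distinct, odd parts unrestricted, in which every even part exceeds every odd part. -/
/-!
By Euler's theorem, partitions into distinct parts are equinumerous with partitions into odd parts.
A partition into odd parts vacuously has distinct even parts, all above its odd parts, so the second
count is at least the number of odd partitions, and strictly more once `n ≥ 2`: the partition
`2 + 1 + ⋯ + 1` is counted there but has an even part.
-/

open Finset Nat.Partition

lemma pcount_eq_card_filter (n : ℕ) (P : Multiset ℕ → Prop) [DecidablePred P] :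
    pcount n P = #{p : n.Partition | P p.parts} := by
  rw [pcount, Nat.card_eq_fintype_card, Fintype.card_subtype]

lemma pcount_nodup_and_le_card_distincts (n : ℕ) (P : Multiset ℕ → Prop) :
    pcount n (fun l => l.Nodup ∧ P l) ≤ #(distincts n) := by
  classical
  rw [pcount_eq_card_filter]
  exact card_le_card fun p hp => by simp_all [distincts]

lemma evenDistinct_and_evenAbove_of_forall_not_even {l : Multiset ℕ}
    (hl : ∀ a ∈ l, ¬Even a) : evenDistinct l ∧ evenAbove l := by
  refine ⟨fun a ha => ?_, fun a ha _ _ hae _ => absurd hae (hl a ha)⟩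
  rw [Multiset.count_eq_zero.mpr fun hmem => hl a hmem ha]
  exact zero_le_one

def twoAndOnes (n : ℕ) (hn : 2 ≤ n) : n.Partition where
  parts := 2 ::ₘ Multiset.replicate (n - 2) 1
  parts_pos hi := by
    rcases Multiset.mem_cons.mp hi with rfl | hi
    · exact two_pos
    · rw [Multiset.eq_of_mem_replicate hi]; exact one_pos
  parts_sum := by simp; omega

lemma evenDistinct_twoAndOnes (n : ℕ) (hn : 2 ≤ n) : evenDistinct (twoAndOnes n hn).parts := by
  intro a ha
  rcases eq_or_ne a 2 with rfl | h2
  · simp [twoAndOnes, Multiset.count_replicate]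
  · have h1 : a ≠ 1 := by rintro rfl; exact Nat.not_even_one ha
    simp [twoAndOnes, Multiset.count_replicate, h1.symm, h2]

lemma evenAbove_twoAndOnes (n : ℕ) (hn : 2 ≤ n) : evenAbove (twoAndOnes n hn).parts := by
  intro a ha b hb hae hbo
  have two_or_one (c : ℕ) (hc : c ∈ (twoAndOnes n hn).parts) : c = 2 ∨ c = 1 := by
    simp only [twoAndOnes, Multiset.mem_cons] at hc
    exact hc.imp_right Multiset.eq_of_mem_replicate
  rcases two_or_one a ha with rfl | rfl
  · rcases two_or_one b hb with rfl | rfl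
    · exact absurd hbo (by decide)
    · exact one_lt_two
  · exact absurd hae Nat.not_even_one

lemma twoAndOnes_not_mem_odds (n : ℕ) (hn : 2 ≤ n) : twoAndOnes n hn ∉ odds n := by
  simp [odds, restricted, twoAndOnes]

lemma odds_ssubset_filter_evenDistinct_evenAbove (n : ℕ) (hn : 2 ≤ n)
    [DecidablePred fun l : Multiset ℕ => evenDistinct l ∧ evenAbove l] :
    odds n ⊂ ({p : n.Partition | evenDistinct p.parts ∧ evenAbove p.parts} : Finset _) := by
  have hsub :
      odds n ⊆ ({p : n.Partition | evenDistinct p.parts ∧ evenAbove p.parts} : Finset _) :=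
    fun p hp => by
      simp only [odds, restricted, mem_filter, mem_univ, true_and] at hp
      simpa using evenDistinct_and_evenAbove_of_forall_not_even hp
  refine (ssubset_iff_of_subset hsub).mpr ⟨twoAndOnes n hn, ?_, twoAndOnes_not_mem_odds n hn⟩
  simpa using ⟨evenDistinct_twoAndOnes n hn, evenAbove_twoAndOnes n hn⟩

theorem stmt6 (n : ℕ) (hn : 2 ≤ n) :
    pcount n (fun l => l.Nodup ∧ oddAbove l) <
      pcount n (fun l => evenDistinct l ∧ evenAbove l) := by
  classical
  calc pcount n (fun l => l.Nodup ∧ oddAbove l)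
      ≤ #(distincts n) := pcount_nodup_and_le_card_distincts n oddAbove
    _ = #(odds n) := (card_odds_eq_card_distincts n).symm
    _ < pcount n (fun l => evenDistinct l ∧ evenAbove l) := by
      rw [pcount_eq_card_filter]
      exact card_lt_card (odds_ssubset_filter_evenDistinct_evenAbove n hn)
end

section
/- For every n ≥ 0, p_od^ed(n) − p_ed^od(n) equals the number of partitions λ counted by p_od^ed(n) that contain both an even and an odd part and whose smallest even part exceeds the largest odd part by exactly 1. -/
/-- The smallest even part of `l` exceeds the largest odd part of `l` by exactly `1`
    (in particular `l` contains parts of both parities). -/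
def minEvenEqMaxOddPlusOne (l : Multiset ℕ) : Prop :=
  ∃ a ∈ l, ∃ b ∈ l, Even a ∧ Odd b ∧ (∀ c ∈ l, Even c → a ≤ c) ∧
    (∀ c ∈ l, Odd c → c ≤ b) ∧ a = b + 1


/-! Write each part `a > 0` as `2 * ⌈a / 2⌉ - (a % 2)`. Pair the `i`-th smallest part with the
`i`-th largest and let them trade parities, keeping their values of `⌈a / 2⌉`; the sum is
unchanged because the number of odd parts is. Reading the parts in increasing order, this reverses
the parity sequence, so it turns "evens below odds" into "odds below evens" and back, and it is an
involution as long as the values `⌈a / 2⌉` are distinct. For distinct parts with evens below odds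
they always are; with odds below evens they are distinct unless the smallest even part is one more
than the largest odd part. -/

def ceilHalf (a : ℕ) : ℕ := (a + 1) / 2

/-- The number with the same `ceilHalf` as `a` and the same parity as `b`. -/
def withParityOf (a b : ℕ) : ℕ := 2 * ceilHalf a - b % 2

lemma eq_of_ceilHalf_eq_of_mod_two_eq {a b : ℕ} (h : ceilHalf a = ceilHalf b)
    (hab : a % 2 = b % 2) : a = b := by
  unfold ceilHalf at h; omega

lemma monotone_ceilHalf : Monotone ceilHalf := fun _ _ h => Nat.div_le_div_right (by omega)

lemma odd_and_eq_add_one_of_ceilHalf_eq {a b : ℕ} (h : ceilHalf a = ceilHalf b) (hab : a < b) :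
    Odd a ∧ b = a + 1 := by
  unfold ceilHalf at h; rw [Nat.odd_iff]; omega

lemma ceilHalf_add_one {a : ℕ} (ha : Odd a) : ceilHalf (a + 1) = ceilHalf a := by
  rw [Nat.odd_iff] at ha; unfold ceilHalf; omega

lemma two_mul_ceilHalf (a : ℕ) : 2 * ceilHalf a = a + a % 2 := by
  unfold ceilHalf; omega

section withParityOf

variable {a : ℕ} (b : ℕ)

lemma withParityOf_pos (ha : 0 < a) : 0 < withParityOf a b := by
  unfold withParityOf ceilHalf; omega

lemma ceilHalf_withParityOf (ha : 0 < a) : ceilHalf (withParityOf a b) = ceilHalf a := by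
  unfold withParityOf ceilHalf; omega

lemma withParityOf_mod_two (ha : 0 < a) : withParityOf a b % 2 = b % 2 := by
  unfold withParityOf ceilHalf; omega

end withParityOf

namespace List

/-- Pairs the `i`-th entry with the `i`-th entry from the end and gives it that entry's parity. -/
def swapParities (l : List ℕ) : List ℕ := zipWith withParityOf l l.reverse

lemma eq_of_map_ceilHalf_eq_of_map_mod_two_eq {l₁ l₂ : List ℕ}
    (h₁ : l₁.map ceilHalf = l₂.map ceilHalf) (h₂ : l₁.map (· % 2) = l₂.map (· % 2)) : l₁ = l₂ := by
  have hinj : Function.Injective fun a => (ceilHalf a, a % 2) := fun a b h =>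
    eq_of_ceilHalf_eq_of_mod_two_eq (Prod.ext_iff.mp h).1 (Prod.ext_iff.mp h).2
  apply List.map_injective_iff.mpr hinj
  rw [← zip_map', ← zip_map', h₁, h₂]

lemma sum_add_sum_map_mod_two (l : List ℕ) :
    l.sum + (l.map (· % 2)).sum = 2 * (l.map ceilHalf).sum := by
  induction l with
  | nil => rfl
  | cons a l ih => simp only [sum_cons, map_cons, mul_add, two_mul_ceilHalf, ← ih]; omega

lemma SortedLT.of_map_ceilHalf {l : List ℕ} (h : (l.map ceilHalf).SortedLT) : l.SortedLT :=
  (pairwise_map.mp h.pairwise |>.imp monotone_ceilHalf.reflect_lt).sortedLT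

section swapParities

variable {l : List ℕ}

@[simp]
lemma length_swapParities (l : List ℕ) : l.swapParities.length = l.length := by
  simp [swapParities]

lemma getElem_swapParities {i : ℕ} (hi : i < l.swapParities.length) :
    l.swapParities[i] = withParityOf (l[i]'(by simpa using hi))
      (l[l.length - 1 - i]'(by simp at hi; omega)) := by
  simp [swapParities, getElem_reverse]

variable (hl : ∀ a ∈ l, 0 < a)
include hl

lemma swapParities_pos : ∀ a ∈ l.swapParities, 0 < a := by
  intro a ha
  obtain ⟨i, hi, rfl⟩ := getElem_of_mem ha
  rw [getElem_swapParities]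
  exact withParityOf_pos _ (hl _ (getElem_mem _))

lemma map_ceilHalf_swapParities : l.swapParities.map ceilHalf = l.map ceilHalf := by
  refine ext_getElem (by simp) fun i h _ => ?_
  simp only [getElem_map, getElem_swapParities]
  exact ceilHalf_withParityOf _ (hl _ (getElem_mem _))

lemma map_mod_two_swapParities : l.swapParities.map (· % 2) = (l.map (· % 2)).reverse := by
  refine ext_getElem (by simp) fun i h _ => ?_
  simp only [getElem_map, getElem_reverse, getElem_swapParities, length_map]
  exact withParityOf_mod_two _ (hl _ (getElem_mem _))

lemma swapParities_swapParities : l.swapParities.swapParities = l := by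
  have hl' := swapParities_pos hl
  refine eq_of_map_ceilHalf_eq_of_map_mod_two_eq ?_ ?_
  · rw [map_ceilHalf_swapParities hl', map_ceilHalf_swapParities hl]
  · rw [map_mod_two_swapParities hl', map_mod_two_swapParities hl, reverse_reverse]

lemma sum_swapParities : l.swapParities.sum = l.sum := by
  have h := sum_add_sum_map_mod_two l.swapParities
  rw [map_ceilHalf_swapParities hl, map_mod_two_swapParities hl, sum_reverse,
    ← sum_add_sum_map_mod_two l] at h
  omega

end swapParities

lemma above_of_map_mod_two_eq_reverse {l l' : List ℕ} (hs : l.SortedLT) (hs' : l'.SortedLT)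
    (hpar : l'.map (· % 2) = (l.map (· % 2)).reverse) {u w : ℕ}
    (h : ∀ a ∈ l, ∀ b ∈ l, a % 2 = u → b % 2 = w → b < a) :
    ∀ a ∈ l', ∀ b ∈ l', a % 2 = w → b % 2 = u → b < a := by
  have hlen : l'.length = l.length := by simpa using congrArg length hpar
  have hmod (i : ℕ) (hi : i < l'.length) :
      l'[i] % 2 = l[l.length - 1 - i]'(by omega) % 2 := by
    have hget := getElem_of_eq hpar (by simpa using hi : i < (l'.map (· % 2)).length)
    simpa only [getElem_map, getElem_reverse, length_map] using hget
  intro a ha b hb hau hbw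
  obtain ⟨i, hi, rfl⟩ := getElem_of_mem ha
  obtain ⟨j, hj, rfl⟩ := getElem_of_mem hb
  have hlt := h _ (getElem_mem _) _ (getElem_mem _) ((hmod j hj).symm.trans hbw)
    ((hmod i hi).symm.trans hau)
  rw [hs.getElem_lt_getElem_iff] at hlt
  rw [hs'.getElem_lt_getElem_iff]
  omega

end List

namespace Multiset

lemma nodup_map_ceilHalf_iff {s : Multiset ℕ} :
    (s.map ceilHalf).Nodup ↔ s.Nodup ∧ ∀ a ∈ s, Odd a → a + 1 ∉ s := by
  constructor
  · intro h
    refine ⟨h.of_map _, fun a ha hodd ha' => ?_⟩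
    have := inj_on_of_nodup_map h _ ha' _ ha (ceilHalf_add_one hodd)
    omega
  · rintro ⟨hs, hgap⟩
    have hnlt {x y : ℕ} (hx : x ∈ s) (hy : y ∈ s) (hxy : ceilHalf x = ceilHalf y) : ¬x < y := by
      intro hlt
      obtain ⟨hodd, rfl⟩ := odd_and_eq_add_one_of_ceilHalf_eq hxy hlt
      exact hgap _ hx hodd hy
    refine (nodup_map_iff_inj_on hs).mpr fun a ha b hb hab => ?_
    exact le_antisymm (not_lt.mp (hnlt hb ha hab.symm)) (not_lt.mp (hnlt ha hb hab))

lemma sortedLT_map_ceilHalf_sort {s : Multiset ℕ} (h : (s.map ceilHalf).Nodup) :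
    (s.sort.map ceilHalf).SortedLT := by
  refine List.sortedLT_iff_nodup_and_sortedLE.mpr ⟨?_, ?_⟩
  · rwa [← coe_nodup, ← map_coe, sort_eq]
  · exact (List.pairwise_map.mpr ((pairwise_sort s (· ≤ ·)).imp (monotone_ceilHalf ·))).sortedLE

end Multiset

section above

variable {s : Multiset ℕ}

lemma oddAbove_iff : oddAbove s ↔ ∀ a ∈ s, ∀ b ∈ s, a % 2 = 1 → b % 2 = 0 → b < a := by
  simp only [oddAbove, Nat.odd_iff, Nat.even_iff]

lemma evenAbove_iff : evenAbove s ↔ ∀ a ∈ s, ∀ b ∈ s, a % 2 = 0 → b % 2 = 1 → b < a := by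
  simp only [evenAbove, Nat.odd_iff, Nat.even_iff]

lemma nodup_map_ceilHalf_iff_of_oddAbove (h : oddAbove s) : (s.map ceilHalf).Nodup ↔ s.Nodup := by
  rw [Multiset.nodup_map_ceilHalf_iff, and_iff_left_iff_imp]
  intro _ a ha hodd ha'
  exact absurd (h a ha _ ha' hodd hodd.add_one) (by omega)

lemma nodup_map_ceilHalf_iff_of_evenAbove (h : evenAbove s) :
    (s.map ceilHalf).Nodup ↔ s.Nodup ∧ ¬minEvenEqMaxOddPlusOne s := by
  rw [Multiset.nodup_map_ceilHalf_iff]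
  refine and_congr_right fun _ => ⟨?_, fun hno a ha hodd ha' => hno ?_⟩
  · rintro hgap ⟨a, ha, b, hb, -, hodd, -, -, rfl⟩
    exact hgap b hb hodd ha
  · refine ⟨a + 1, ha', a, ha, hodd.add_one, hodd, fun c hc hc' => h c hc a ha hc' hodd,
      fun c hc hc' => Nat.lt_succ_iff.mp (h _ ha' c hc hodd.add_one hc'), rfl⟩

end above

namespace Nat.Partition

variable {n : ℕ}

lemma sort_parts_pos (p : n.Partition) : ∀ a ∈ p.parts.sort, 0 < a :=
  fun _ h => p.parts_pos ((Multiset.mem_sort _).mp h)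

def swapParities (p : n.Partition) : n.Partition where
  parts := p.parts.sort.swapParities
  parts_pos ha := List.swapParities_pos p.sort_parts_pos _ (Multiset.mem_coe.mp ha)
  parts_sum := by
    rw [Multiset.sum_coe, List.sum_swapParities p.sort_parts_pos,
      ← Multiset.sum_coe, Multiset.sort_eq, p.parts_sum]

lemma parts_swapParities (p : n.Partition) :
    p.swapParities.parts = p.parts.sort.swapParities := rfl

lemma map_ceilHalf_parts_swapParities (p : n.Partition) :
    p.swapParities.parts.map ceilHalf = p.parts.map ceilHalf := by
  rw [parts_swapParities, Multiset.map_coe,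
    List.map_ceilHalf_swapParities p.sort_parts_pos,
    ← Multiset.map_coe, Multiset.sort_eq]

variable {p : n.Partition} (hp : (p.parts.map ceilHalf).Nodup)
include hp

lemma sortedLT_swapParities_sort_parts : p.parts.sort.swapParities.SortedLT := by
  refine List.SortedLT.of_map_ceilHalf ?_
  rw [List.map_ceilHalf_swapParities p.sort_parts_pos]
  exact Multiset.sortedLT_map_ceilHalf_sort hp

lemma sort_parts_swapParities : p.swapParities.parts.sort = p.parts.sort.swapParities := by
  rw [parts_swapParities, Multiset.coe_sort]
  exact List.mergeSort_eq_self _ (sortedLT_swapParities_sort_parts hp).sortedLE.pairwise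

lemma swapParities_swapParities : p.swapParities.swapParities = p := by
  ext1
  rw [parts_swapParities, sort_parts_swapParities hp,
    List.swapParities_swapParities p.sort_parts_pos, Multiset.sort_eq]

lemma above_parts_swapParities {u w : ℕ}
    (h : ∀ a ∈ p.parts, ∀ b ∈ p.parts, a % 2 = u → b % 2 = w → b < a) :
    ∀ a ∈ p.swapParities.parts, ∀ b ∈ p.swapParities.parts, a % 2 = w → b % 2 = u → b < a := by
  have := List.above_of_map_mod_two_eq_reverse
    (List.SortedLT.of_map_ceilHalf (Multiset.sortedLT_map_ceilHalf_sort hp))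
    (sortedLT_swapParities_sort_parts hp) (List.map_mod_two_swapParities p.sort_parts_pos)
    (by simpa only [← Multiset.mem_coe, Multiset.sort_eq] using h)
  simpa only [parts_swapParities, Multiset.mem_coe] using this

end Nat.Partition

def swapParitiesEquiv (n : ℕ) :
    {p : n.Partition // oddAbove p.parts ∧ (p.parts.map ceilHalf).Nodup} ≃
      {p : n.Partition // evenAbove p.parts ∧ (p.parts.map ceilHalf).Nodup} where
  toFun p := ⟨p.1.swapParities,
    evenAbove_iff.mpr (p.1.above_parts_swapParities p.2.2 (oddAbove_iff.mp p.2.1)),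
    p.1.map_ceilHalf_parts_swapParities ▸ p.2.2⟩
  invFun p := ⟨p.1.swapParities,
    oddAbove_iff.mpr (p.1.above_parts_swapParities p.2.2 (evenAbove_iff.mp p.2.1)),
    p.1.map_ceilHalf_parts_swapParities ▸ p.2.2⟩
  left_inv p := Subtype.ext (Nat.Partition.swapParities_swapParities p.2.2)
  right_inv p := Subtype.ext (Nat.Partition.swapParities_swapParities p.2.2)

lemma pcount_congr {n : ℕ} {P Q : Multiset ℕ → Prop} (h : ∀ l, P l ↔ Q l) :
    pcount n P = pcount n Q := by
  rw [funext fun l => propext (h l)]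

lemma pcount_eq_pcount_and_add_pcount_and_not (n : ℕ) (P Q : Multiset ℕ → Prop) :
    pcount n P = pcount n (fun l => P l ∧ Q l) + pcount n (fun l => P l ∧ ¬Q l) := by
  classical
  rw [pcount, pcount, pcount, ← Nat.card_sum]
  let P' (p : n.Partition) := P p.parts
  exact Nat.card_congr <|
    (Equiv.sumCompl fun p : {p : n.Partition // P' p} => Q p.1.parts).symm.trans
      (Equiv.sumCongr (Equiv.subtypeSubtypeEquivSubtypeInter P' (fun p => Q p.parts))
        (Equiv.subtypeSubtypeEquivSubtypeInter P' (fun p => ¬Q p.parts)))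

theorem stmt7 (n : ℕ) :
    (pcount n (fun l => l.Nodup ∧ evenAbove l) : ℤ) -
      pcount n (fun l => l.Nodup ∧ oddAbove l) =
    pcount n (fun l => l.Nodup ∧ evenAbove l ∧ minEvenEqMaxOddPlusOne l) := by
  have hsplit := pcount_eq_pcount_and_add_pcount_and_not n (fun l => l.Nodup ∧ evenAbove l)
    minEvenEqMaxOddPlusOne
  have hodd : pcount n (fun l => l.Nodup ∧ oddAbove l) =
      pcount n (fun l => oddAbove l ∧ (l.map ceilHalf).Nodup) :=
    pcount_congr fun l => and_comm.trans
      (and_congr_right fun h => (nodup_map_ceilHalf_iff_of_oddAbove h).symm)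
  have heven : pcount n (fun l => l.Nodup ∧ evenAbove l ∧ ¬minEvenEqMaxOddPlusOne l) =
      pcount n (fun l => evenAbove l ∧ (l.map ceilHalf).Nodup) :=
    pcount_congr fun l => and_left_comm.trans
      (and_congr_right fun h => (nodup_map_ceilHalf_iff_of_evenAbove h).symm)
  have hswap : pcount n (fun l => oddAbove l ∧ (l.map ceilHalf).Nodup) =
      pcount n (fun l => evenAbove l ∧ (l.map ceilHalf).Nodup) :=
    Nat.card_congr (swapParitiesEquiv n)
  simp only [and_assoc] at hsplit
  omega
end

section
/- For every n ≥ 3, the number of partitions of 2n in which every odd part exceeds every even part, the largest even part occurs with odd multiplicity, and every other part occurs with even multiplicity (with partitions consisting only of odd parts counted as having largest even part 0), is strictly less than the number of partitions of 2n+1 containing both even and odd parts, in which every even part exceeds every odd part, the largest even part and the largest odd part each occur with odd multiplicity, and all other parts occur with even multiplicity. -/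
/-- Partitions counted by `p̄_eu^ou`: all odd parts above all even parts, the largest
even part has odd multiplicity and all other parts have even multiplicity; a partition
with only odd parts qualifies iff all its parts have even multiplicity. -/
def barOU (l : Multiset ℕ) : Prop :=
  oddAbove l ∧
    (((∀ a ∈ l, Odd a) ∧ ∀ a ∈ l, Even (l.count a)) ∨
      ∃ e ∈ l, Even e ∧ (∀ b ∈ l, Even b → b ≤ e) ∧ Odd (l.count e) ∧
        ∀ a ∈ l, a ≠ e → Even (l.count a))

/-- Partitions counted by `p̄_ou^eu`: both parities occur, all even parts above all odd
parts, the largest even part and the largest odd part each have odd multiplicity, and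
all other parts have even multiplicity. -/
def barEU (l : Multiset ℕ) : Prop :=
  evenAbove l ∧
    ∃ e ∈ l, ∃ o ∈ l, Even e ∧ Odd o ∧ (∀ b ∈ l, Even b → b ≤ e) ∧
      (∀ b ∈ l, Odd b → b ≤ o) ∧ Odd (l.count e) ∧ Odd (l.count o) ∧
      ∀ a ∈ l, a ≠ e → a ≠ o → Even (l.count a)


lemma sup_mem' {s : Multiset ℕ} (h : s ≠ 0) : s.sup ∈ s := by
  induction s using Multiset.induction with
  | empty => simp at h
  | cons a s ih =>
    rw [Multiset.sup_cons]
    rcases eq_or_ne s 0 with rfl | hs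
    · simp
    · rcases le_total a s.sup with h1 | h1
      · rw [sup_eq_right.mpr h1]; exact Multiset.mem_cons_of_mem (ih hs)
      · rw [sup_eq_left.mpr h1]; exact Multiset.mem_cons_self _ _

lemma count_map_pred {s : Multiset ℕ} (h : ∀ x ∈ s, 2 ≤ x) (k : ℕ) :
    (s.map (· - 1)).count k = s.count (k + 1) := by
  induction s using Multiset.induction with
  | empty => simp
  | cons a s ih =>
    have ha := h a (Multiset.mem_cons_self _ _)
    rw [Multiset.map_cons, Multiset.count_cons, Multiset.count_cons,
      ih (fun x hx => h x (Multiset.mem_cons_of_mem hx))]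
    congr 1
    have : (k = a - 1) ↔ (k + 1 = a) := by omega
    simp [this]

lemma sum_map_pred {s : Multiset ℕ} (h : ∀ x ∈ s, 1 ≤ x) :
    (s.map (· - 1)).sum + Multiset.card s = s.sum := by
  induction s using Multiset.induction with
  | empty => simp
  | cons a s ih =>
    have ha := h a (Multiset.mem_cons_self _ _)
    have := ih (fun x hx => h x (Multiset.mem_cons_of_mem hx))
    rw [Multiset.map_cons, Multiset.sum_cons, Multiset.sum_cons, Multiset.card_cons]
    omega

lemma map_pred_succ {s : Multiset ℕ} (h : ∀ x ∈ s, 1 ≤ x) :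
    (s.map (· - 1)).map (· + 1) = s := by
  rw [Multiset.map_map]
  conv_rhs => rw [← Multiset.map_id s]
  exact Multiset.map_congr rfl (fun x hx => by have := h x hx; simp [Function.comp]; omega)

lemma odd_card' {s : Multiset ℕ} {e : ℕ} (he : e ∈ s) (h1 : Odd (s.count e))
    (h2 : ∀ a ∈ s, a ≠ e → Even (s.count a)) : Odd (Multiset.card s) := by
  rw [← Multiset.toFinset_sum_count_eq]
  rw [← Finset.add_sum_erase _ _ (Multiset.mem_toFinset.mpr he)]
  exact h1.add_even (Finset.even_sum _ fun a ha =>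
    h2 a (Multiset.mem_toFinset.mp (Finset.mem_of_mem_erase ha)) (Finset.ne_of_mem_erase ha))

lemma even_add_odd_filter (l : Multiset ℕ) : l.filter Even + l.filter Odd = l := by
  have h2 : l.filter (fun a => ¬ Even a) = l.filter Odd :=
    Multiset.filter_congr (fun x _ => (Nat.not_even_iff_odd))
  rw [← h2]; exact Multiset.filter_add_not Even l

def phi (l : Multiset ℕ) : Multiset ℕ :=
  if (l.filter Even) = 0 then ((l.filter Odd).sup + 1) ::ₘ l.erase ((l.filter Odd).sup)
  else if (l.filter Odd) = 0 then 1 ::ₘ l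
  else ((l.filter Odd).sup + (l.filter Even).sup + Multiset.card (l.filter Even)) ::ₘ
    (((l.filter Odd).erase (l.filter Odd).sup) +
      ((l.filter Even).erase (l.filter Even).sup).map (· - 1))

lemma all_odd_of_no_even {l : Multiset ℕ} (hE : l.filter Even = 0) : ∀ x ∈ l, Odd x := by
  intro x hx
  rw [← Nat.not_even_iff_odd] -- deprecated ok
  intro hev
  have : x ∈ l.filter Even := Multiset.mem_filter.mpr ⟨hx, hev⟩
  rw [hE] at this; exact absurd this (Multiset.notMem_zero x)

lemma all_even_of_no_odd {l : Multiset ℕ} (hO : l.filter Odd = 0) : ∀ x ∈ l, Even x := by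
  intro x hx
  rw [← Nat.not_odd_iff_even]
  intro hod
  have : x ∈ l.filter Odd := Multiset.mem_filter.mpr ⟨hx, hod⟩
  rw [hO] at this; exact absurd this (Multiset.notMem_zero x)

lemma barOU_all_odd_counts {l : Multiset ℕ} (h : barOU l) (hE : l.filter Even = 0) :
    ∀ a ∈ l, Even (l.count a) := by
  rcases h.2 with ⟨-, hc⟩ | ⟨e, hel, hee, -⟩
  · exact hc
  · exfalso
    have : e ∈ l.filter Even := Multiset.mem_filter.mpr ⟨hel, hee⟩
    rw [hE] at this; exact absurd this (Multiset.notMem_zero e)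

/-- in the case `l.filter Even ≠ 0`, the witness `e` in `barOU` must be `(l.filter Even).sup`. -/

lemma barOU_top {l : Multiset ℕ} (h : barOU l) (hE : l.filter Even ≠ 0) :
    Even (l.filter Even).sup ∧ (l.filter Even).sup ∈ l ∧
    (∀ b ∈ l, Even b → b ≤ (l.filter Even).sup) ∧ Odd (l.count (l.filter Even).sup) ∧
    (∀ a ∈ l, a ≠ (l.filter Even).sup → Even (l.count a)) := by
  have hsm := sup_mem' hE
  have hsl : (l.filter Even).sup ∈ l := (Multiset.mem_filter.mp hsm).1
  have hse : Even (l.filter Even).sup := (Multiset.mem_filter.mp hsm).2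
  rcases h.2 with ⟨hall, -⟩ | ⟨e, hel, hee, hemax, hecnt, hother⟩
  · exact absurd (hall _ hsl) (Nat.not_odd_iff_even.mpr hse)
  · have heq : e = (l.filter Even).sup := by
      refine le_antisymm (Multiset.le_sup (Multiset.mem_filter.mpr ⟨hel, hee⟩)) (hemax _ hsl hse)
    subst heq
    exact ⟨hee, hel, hemax, hecnt, hother⟩

lemma phi_case1 {l : Multiset ℕ} (h : barOU l) (hpos : ∀ x ∈ l, 0 < x) (hl : l ≠ 0)
    (hE : l.filter Even = 0) :
    barEU (phi l) ∧ (phi l).sum = l.sum + 1 ∧ (∀ x ∈ phi l, 0 < x) := by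
  have hallodd := all_odd_of_no_even hE
  have hcnt := barOU_all_odd_counts h hE
  have hOl : l.filter Odd = l := Multiset.filter_eq_self.mpr hallodd
  set a := (l.filter Odd).sup with ha
  have hal : a ∈ l := by rw [ha, hOl]; exact sup_mem' hl
  have haodd : Odd a := hallodd a hal
  have hmax : ∀ x ∈ l, x ≤ a := fun x hx => by rw [ha, hOl]; exact Multiset.le_sup hx
  have hphi : phi l = (a + 1) ::ₘ l.erase a := by rw [phi, if_pos hE]
  have hca : Even (l.count a) := hcnt a hal
  have hca1 : 1 ≤ l.count a := Multiset.count_pos.mpr hal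
  have hcount : ∀ x, (phi l).count x = (l.erase a).count x + if x = a + 1 then 1 else 0 :=
    fun x => by rw [hphi, Multiset.count_cons]
  have hmem : ∀ x ∈ phi l, x = a + 1 ∨ x ∈ l.erase a := by
    intro x hx; rw [hphi, Multiset.mem_cons] at hx; exact hx
  have haerase : (l.erase a).count a = l.count a - 1 := Multiset.count_erase_self a l
  have hanotin : (a+1) ∉ l := fun hmem' =>
    (Nat.not_odd_iff_even.mpr haodd.add_one) (hallodd _ hmem')
  have hmemA : a ∈ phi l := by
    rw [hphi]
    refine Multiset.mem_cons_of_mem ?_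
    rw [← Multiset.count_pos, haerase]
    obtain ⟨k, hk⟩ := hca; omega
  have hcountA : (phi l).count a = l.count a - 1 := by
    rw [hcount a, haerase, if_neg (by omega)]
    omega
  have hcountE : (phi l).count (a+1) = 1 := by
    rw [hcount, if_pos rfl, Multiset.count_erase_of_ne (by omega),
      Multiset.count_eq_zero.mpr hanotin]
  refine ⟨⟨?_, a+1, (by rw [hphi]; exact Multiset.mem_cons_self _ _), a, hmemA, haodd.add_one, haodd, ?_, ?_, ?_, ?_, ?_⟩, ?_, ?_⟩
  · -- evenAbove
    intro x hx y hy hxe hyo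
    rcases hmem x hx with rfl | hx'
    · rcases hmem y hy with rfl | hy'
      · exact absurd hyo (Nat.not_odd_iff_even.mpr haodd.add_one)
      · exact Nat.lt_succ_of_le (hmax y (Multiset.mem_of_mem_erase hy'))
    · exact absurd hxe (Nat.not_even_iff_odd.mpr (hallodd x (Multiset.mem_of_mem_erase hx')))
  · -- max even
    intro b hb hbe
    rcases hmem b hb with rfl | hb'
    · exact le_refl _
    · exact absurd hbe (Nat.not_even_iff_odd.mpr (hallodd b (Multiset.mem_of_mem_erase hb')))
  · -- max odd
    intro b hb hbo
    rcases hmem b hb with rfl | hb'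
    · exact absurd hbo (Nat.not_odd_iff_even.mpr haodd.add_one)
    · exact hmax b (Multiset.mem_of_mem_erase hb')
  · rw [hcountE]; exact odd_one
  · rw [hcountA]; exact Nat.Even.sub_odd hca1 hca odd_one
  · -- other counts even
    intro x hx hx1 hx2
    rcases hmem x hx with rfl | hx'
    · exact absurd rfl hx1
    · rw [hcount, if_neg hx1, Multiset.count_erase_of_ne hx2]
      exact hcnt x (Multiset.mem_of_mem_erase hx')
  · -- sum
    have h2 : a + (l.erase a).sum = l.sum := by
      conv_rhs => rw [← Multiset.cons_erase hal]
      rw [Multiset.sum_cons]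
    rw [hphi, Multiset.sum_cons]; omega
  · intro x hx
    rcases hmem x hx with rfl | hx'
    · omega
    · exact hpos x (Multiset.mem_of_mem_erase hx')

lemma phi_case2 {l : Multiset ℕ} (h : barOU l) (hpos : ∀ x ∈ l, 0 < x) (hl : l ≠ 0)
    (hE : l.filter Even ≠ 0) (hO : l.filter Odd = 0) :
    barEU (phi l) ∧ (phi l).sum = l.sum + 1 ∧ (∀ x ∈ phi l, 0 < x) := by
  have halleven := all_even_of_no_odd hO
  obtain ⟨hee, hel, hemax, hecnt, hother⟩ := barOU_top h hE
  set e := (l.filter Even).sup with he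
  have hphi : phi l = 1 ::ₘ l := by rw [phi, if_neg hE, if_pos hO]
  have h1notin : (1 : ℕ) ∉ l := fun hmem' =>
    (Nat.not_even_iff_odd.mpr odd_one) (halleven _ hmem')
  have hcount : ∀ x, (phi l).count x = l.count x + if x = 1 then 1 else 0 :=
    fun x => by rw [hphi, Multiset.count_cons]
  have hmem : ∀ x ∈ phi l, x = 1 ∨ x ∈ l := by
    intro x hx; rw [hphi, Multiset.mem_cons] at hx; exact hx
  have he1 : e ≠ 1 := fun h' => (Nat.not_even_iff_odd.mpr odd_one) (h' ▸ hee)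
  refine ⟨⟨?_, e, (by rw [hphi]; exact Multiset.mem_cons_of_mem hel), 1,
    (by rw [hphi]; exact Multiset.mem_cons_self _ _), hee, odd_one,
    ?_, ?_, ?_, ?_, ?_⟩, ?_, ?_⟩
  · intro x hx y hy hxe hyo
    rcases hmem x hx with rfl | hx'
    · exact absurd hxe (Nat.not_even_iff_odd.mpr odd_one)
    · rcases hmem y hy with rfl | hy'
      · have := hpos x hx'
        obtain ⟨c, hc⟩ := halleven x hx'; omega
      · exact absurd hyo (Nat.not_odd_iff_even.mpr (halleven y hy'))
  · intro b hb hbe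
    rcases hmem b hb with rfl | hb'
    · exact absurd hbe (Nat.not_even_iff_odd.mpr odd_one)
    · exact hemax b hb' hbe
  · intro b hb hbo
    rcases hmem b hb with rfl | hb'
    · exact le_refl _
    · exact absurd hbo (Nat.not_odd_iff_even.mpr (halleven b hb'))
  · rw [hcount, if_neg he1]; exact hecnt
  · rw [hcount, if_pos rfl, Multiset.count_eq_zero.mpr h1notin]; exact odd_one
  · intro x hx hx1 hx2
    rcases hmem x hx with rfl | hx'
    · exact absurd rfl hx2
    · rw [hcount, if_neg hx2]; exact hother x hx' hx1
  · rw [hphi, Multiset.sum_cons]; omega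
  · intro x hx
    rcases hmem x hx with rfl | hx'
    · omega
    · exact hpos x hx'

lemma case3_facts {l : Multiset ℕ} (h : barOU l) (hpos : ∀ x ∈ l, 0 < x)
    (hE : l.filter Even ≠ 0) (hO : l.filter Odd ≠ 0) :
    Odd (l.filter Odd).sup ∧ (l.filter Odd).sup ∈ l ∧
    (∀ x ∈ l, Odd x → x ≤ (l.filter Odd).sup) ∧
    (∀ x ∈ l, Odd x → (l.filter Even).sup < x) ∧
    2 ≤ (l.filter Even).sup ∧
    Odd (Multiset.card (l.filter Even)) ∧
    (l.filter Even).sup < (l.filter Odd).sup ∧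
    Even (l.count (l.filter Odd).sup) := by
  obtain ⟨hee, hel, hemax, hecnt, hother⟩ := barOU_top h hE
  have ham := sup_mem' hO
  have hal : (l.filter Odd).sup ∈ l := (Multiset.mem_filter.mp ham).1
  have haodd : Odd (l.filter Odd).sup := (Multiset.mem_filter.mp ham).2
  have hamax : ∀ x ∈ l, Odd x → x ≤ (l.filter Odd).sup :=
    fun x hx hox => Multiset.le_sup (Multiset.mem_filter.mpr ⟨hx, hox⟩)
  have hgt : ∀ x ∈ l, Odd x → (l.filter Even).sup < x :=
    fun x hx hox => h.1 x hx _ hel hox hee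
  have he2 : 2 ≤ (l.filter Even).sup := by
    have h0 := hpos _ hel
    obtain ⟨c, hc⟩ := hee; omega
  have hcard : Odd (Multiset.card (l.filter Even)) := by
    refine odd_card' (sup_mem' hE) ?_ ?_
    · rw [Multiset.count_filter_of_pos hee]; exact hecnt
    · intro b hb hbne
      have hbl : b ∈ l := (Multiset.mem_filter.mp hb).1
      have hbe : Even b := (Multiset.mem_filter.mp hb).2
      rw [Multiset.count_filter_of_pos hbe]
      exact hother b hbl hbne
  have hea := hgt _ hal haodd
  have hane : (l.filter Odd).sup ≠ (l.filter Even).sup :=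
    fun h' => (Nat.not_even_iff_odd.mpr haodd) (h' ▸ hee)
  exact ⟨haodd, hal, hamax, hgt, he2, hcard, hea, hother _ hal hane⟩

lemma phi_case3 {l : Multiset ℕ} (h : barOU l) (hpos : ∀ x ∈ l, 0 < x)
    (hE : l.filter Even ≠ 0) (hO : l.filter Odd ≠ 0) :
    barEU (phi l) ∧ (phi l).sum = l.sum + 1 ∧ (∀ x ∈ phi l, 0 < x) := by
  obtain ⟨hee, hel, hemax, hecnt, hother⟩ := barOU_top h hE
  obtain ⟨haodd, hal, hamax, hgt, he2, hcardE, hea, hca⟩ := case3_facts h hpos hE hO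
  have hphi : phi l = ((l.filter Odd).sup + (l.filter Even).sup + Multiset.card (l.filter Even)) ::ₘ
      (((l.filter Odd).erase (l.filter Odd).sup) +
        ((l.filter Even).erase (l.filter Even).sup).map (· - 1)) := by
    rw [phi, if_neg hE, if_neg hO]
  set a := (l.filter Odd).sup with hadef
  set e := (l.filter Even).sup with hedef
  set E := l.filter Even with hEdef
  set O := l.filter Odd with hOdef
  set Er := E.erase e with hErdef
  set Or := O.erase a with hOrdef
  set m := Er.map (· - 1) with hmdef
  set M := a + e + Multiset.card E with hMdef
  have heE : e ∈ E := sup_mem' hE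
  have haO : a ∈ O := sup_mem' hO
  have hErmem : ∀ b ∈ Er, Even b ∧ b ≤ e ∧ 2 ≤ b ∧ b ∈ l := by
    intro b hb
    have hbE : b ∈ E := Multiset.mem_of_mem_erase hb
    have hbl : b ∈ l := (Multiset.mem_filter.mp hbE).1
    have hbe : Even b := (Multiset.mem_filter.mp hbE).2
    have h0 : 0 < b := hpos b hbl
    obtain ⟨c, hc⟩ := hbe
    exact ⟨⟨c, hc⟩, hemax b hbl ⟨c, hc⟩, by omega, hbl⟩
  have hmmem : ∀ x ∈ m, Odd x ∧ x < e := by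
    intro x hx
    obtain ⟨b, hb, rfl⟩ := Multiset.mem_map.mp hx
    obtain ⟨hbe, hble, hb2, hbl⟩ := hErmem b hb
    exact ⟨Nat.Even.sub_odd (by omega) hbe odd_one, by omega⟩
  have hOrmem : ∀ x ∈ Or, Odd x ∧ x ≤ a ∧ e < x ∧ x ∈ l := by
    intro x hx
    have hxO : x ∈ O := Multiset.mem_of_mem_erase hx
    have hxl : x ∈ l := (Multiset.mem_filter.mp hxO).1
    have hxo : Odd x := (Multiset.mem_filter.mp hxO).2
    exact ⟨hxo, Multiset.le_sup hxO, hgt x hxl hxo, hxl⟩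
  have hMeven : Even M := by
    have h1 : Odd (a + e) := haodd.add_even hee
    exact h1.add_odd hcardE
  have hcard1 : 1 ≤ Multiset.card E := by
    have := Multiset.card_pos.mpr hE; omega
  have haM : a + 3 ≤ M := by omega
  have hEr2 : ∀ b ∈ Er, 2 ≤ b := fun b hb => (hErmem b hb).2.2.1
  have hcm : ∀ k, m.count k = Er.count (k+1) := count_map_pred hEr2
  have hcount : ∀ x, (phi l).count x = Or.count x + m.count x + if x = M then 1 else 0 := by
    intro x; rw [hphi, Multiset.count_cons, Multiset.count_add]
  have hmemphi : ∀ x ∈ phi l, x = M ∨ x ∈ Or ∨ x ∈ m := by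
    intro x hx; rw [hphi, Multiset.mem_cons, Multiset.mem_add] at hx; exact hx
  have hcountM : (phi l).count M = 1 := by
    rw [hcount, if_pos rfl]
    have h1 : Or.count M = 0 := Multiset.count_eq_zero.mpr
      (fun hx => (Nat.not_even_iff_odd.mpr (hOrmem M hx).1) hMeven)
    have h2 : m.count M = 0 := Multiset.count_eq_zero.mpr
      (fun hx => (Nat.not_even_iff_odd.mpr (hmmem M hx).1) hMeven)
    omega
  have hcOr : Or.count a = l.count a - 1 := by
    rw [hOrdef, Multiset.count_erase_self, hOdef, Multiset.count_filter_of_pos haodd]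
  have hcountA : (phi l).count a = l.count a - 1 := by
    rw [hcount, if_neg (by omega)]
    have h2 : m.count a = 0 := by
      rw [hcm]
      refine Multiset.count_eq_zero.mpr (fun hx => ?_)
      have := (hErmem _ hx).2.1
      omega
    omega
  have hal1 : 1 ≤ l.count a := Multiset.count_pos.mpr hal
  have hamem : a ∈ phi l := by
    rw [← Multiset.count_pos, hcountA]
    obtain ⟨k, hk⟩ := hca; omega
  refine ⟨⟨?_, M, (by rw [hphi]; exact Multiset.mem_cons_self _ _), a, hamem, hMeven, haodd,
    ?_, ?_, ?_, ?_, ?_⟩, ?_, ?_⟩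
  · -- evenAbove
    intro x hx y hy hxe hyo
    have hxM : x = M := by
      rcases hmemphi x hx with rfl | hx' | hx'
      · rfl
      · exact absurd hxe (Nat.not_even_iff_odd.mpr (hOrmem x hx').1)
      · exact absurd hxe (Nat.not_even_iff_odd.mpr (hmmem x hx').1)
    subst hxM
    rcases hmemphi y hy with rfl | hy' | hy'
    · exact absurd hyo (Nat.not_odd_iff_even.mpr hMeven)
    · have := (hOrmem y hy').2.1; omega
    · have := (hmmem y hy').2; omega
  · -- max even
    intro b hb hbe
    rcases hmemphi b hb with rfl | hb' | hb'
    · exact le_refl _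
    · exact absurd hbe (Nat.not_even_iff_odd.mpr (hOrmem b hb').1)
    · exact absurd hbe (Nat.not_even_iff_odd.mpr (hmmem b hb').1)
  · -- max odd
    intro b hb hbo
    rcases hmemphi b hb with rfl | hb' | hb'
    · exact absurd hbo (Nat.not_odd_iff_even.mpr hMeven)
    · exact (hOrmem b hb').2.1
    · have := (hmmem b hb').2; omega
  · rw [hcountM]; exact odd_one
  · rw [hcountA]; exact Nat.Even.sub_odd hal1 hca odd_one
  · -- other counts even
    intro x hx hxM hxa
    have hxodd : Odd x := by
      rcases hmemphi x hx with rfl | hx' | hx'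
      · exact absurd rfl hxM
      · exact (hOrmem x hx').1
      · exact (hmmem x hx').1
    have hOre : Even (Or.count x) := by
      rw [hOrdef, Multiset.count_erase_of_ne hxa, hOdef, Multiset.count_filter_of_pos hxodd]
      by_cases hxl : x ∈ l
      · exact hother x hxl (fun h' => (Nat.not_even_iff_odd.mpr hxodd) (h' ▸ hee))
      · rw [Multiset.count_eq_zero.mpr hxl]; exact Even.zero
    have hme : Even (m.count x) := by
      rw [hcm]
      by_cases hxe1 : x + 1 = e
      · rw [hErdef, hxe1, Multiset.count_erase_self, hEdef, Multiset.count_filter_of_pos hee]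
        exact Nat.Odd.sub_odd hecnt odd_one
      · rw [hErdef, Multiset.count_erase_of_ne hxe1, hEdef, Multiset.count_filter]
        by_cases hx1e : Even (x+1)
        · rw [if_pos hx1e]
          by_cases hxl : x + 1 ∈ l
          · exact hother _ hxl hxe1
          · rw [Multiset.count_eq_zero.mpr hxl]; exact Even.zero
        · rw [if_neg hx1e]; exact Even.zero
    rw [hcount, if_neg hxM]
    simpa using hOre.add hme
  · -- sum
    have hOsum : O.sum = a + Or.sum := by
      conv_lhs => rw [← Multiset.cons_erase haO]
      rw [Multiset.sum_cons]
    have hEsum : E.sum = e + Er.sum := by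
      conv_lhs => rw [← Multiset.cons_erase heE]
      rw [Multiset.sum_cons]
    have hcards : Multiset.card E = Multiset.card Er + 1 := by
      conv_lhs => rw [← Multiset.cons_erase heE]
      rw [Multiset.card_cons]
    have hmsum : m.sum + Multiset.card Er = Er.sum :=
      sum_map_pred (fun b hb => by have := hEr2 b hb; omega)
    have hlsum : E.sum + O.sum = l.sum := by
      have h' := congrArg Multiset.sum (even_add_odd_filter l)
      rwa [Multiset.sum_add] at h'
    rw [hphi, Multiset.sum_cons, Multiset.sum_add]
    omega
  · intro x hx
    rcases hmemphi x hx with rfl | hx' | hx'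
    · omega
    · exact hpos x (hOrmem x hx').2.2.2
    · obtain ⟨c, hc⟩ := (hmmem x hx').1; omega

lemma phi_spec {l : Multiset ℕ} (h : barOU l) (hpos : ∀ x ∈ l, 0 < x) (hl : l ≠ 0) :
    barEU (phi l) ∧ (phi l).sum = l.sum + 1 ∧ (∀ x ∈ phi l, 0 < x) := by
  by_cases hE : l.filter Even = 0
  · exact phi_case1 h hpos hl hE
  · by_cases hO : l.filter Odd = 0
    · exact phi_case2 h hpos hl hE hO
    · exact phi_case3 h hpos hE hO

lemma case1_amem {l : Multiset ℕ} (h : barOU l) (hl : l ≠ 0) (hE : l.filter Even = 0) :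
    (l.filter Odd).sup ∈ phi l := by
  have hallodd := all_odd_of_no_even hE
  have hcnt := barOU_all_odd_counts h hE
  have hOl : l.filter Odd = l := Multiset.filter_eq_self.mpr hallodd
  have hal : (l.filter Odd).sup ∈ l := by rw [hOl]; exact sup_mem' hl
  have hphi : phi l = ((l.filter Odd).sup + 1) ::ₘ l.erase ((l.filter Odd).sup) := by
    rw [phi, if_pos hE]
  rw [hphi]
  refine Multiset.mem_cons_of_mem ?_
  rw [← Multiset.count_pos, Multiset.count_erase_self]
  have h1 := Multiset.count_pos.mpr hal
  obtain ⟨k, hk⟩ := hcnt _ hal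
  omega

lemma case3_amem {l : Multiset ℕ} (h : barOU l) (hpos : ∀ x ∈ l, 0 < x)
    (hE : l.filter Even ≠ 0) (hO : l.filter Odd ≠ 0) :
    (l.filter Odd).sup ∈ phi l := by
  obtain ⟨haodd, hal, hamax, hgt, he2, hcardE, hea, hca⟩ := case3_facts h hpos hE hO
  have hphi : phi l = ((l.filter Odd).sup + (l.filter Even).sup + Multiset.card (l.filter Even)) ::ₘ
      (((l.filter Odd).erase (l.filter Odd).sup) +
        ((l.filter Even).erase (l.filter Even).sup).map (· - 1)) := by
    rw [phi, if_neg hE, if_neg hO]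
  rw [hphi]
  refine Multiset.mem_cons_of_mem (Multiset.mem_add.mpr (Or.inl ?_))
  rw [← Multiset.count_pos, Multiset.count_erase_self, Multiset.count_filter_of_pos haodd]
  have h1 := Multiset.count_pos.mpr hal
  obtain ⟨k, hk⟩ := hca
  omega

/-- membership description for case-2 images -/

lemma case2_mem {l : Multiset ℕ} (hO : l.filter Odd = 0) {x : ℕ}
    (hx : x ∈ phi l) (hE : l.filter Even ≠ 0) : x = 1 ∨ Even x := by
  have hphi : phi l = 1 ::ₘ l := by rw [phi, if_neg hE, if_pos hO]
  rw [hphi, Multiset.mem_cons] at hx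
  rcases hx with rfl | hx'
  · exact Or.inl rfl
  · exact Or.inr (all_even_of_no_odd hO x hx')

lemma phi_ne_12 {l1 l2 : Multiset ℕ} (h1 : barOU l1) (hp1 : ∀ x ∈ l1, 0 < x) (hl1 : l1 ≠ 0)
    (hE1 : l1.filter Even = 0)
    (hl2 : l2 ≠ 0) (hE2 : l2.filter Even ≠ 0) (hO2 : l2.filter Odd = 0)
    (hs : 6 ≤ l1.sum) : phi l1 ≠ phi l2 := by
  intro heq
  have hallodd := all_odd_of_no_even hE1
  have hOl : l1.filter Odd = l1 := Multiset.filter_eq_self.mpr hallodd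
  set a := (l1.filter Odd).sup with hadef
  have hal : a ∈ l1 := by rw [hadef, hOl]; exact sup_mem' hl1
  have haodd : Odd a := hallodd a hal
  have hphi1 : phi l1 = (a + 1) ::ₘ l1.erase a := by rw [phi, if_pos hE1]
  have hphi2 : phi l2 = 1 ::ₘ l2 := by rw [phi, if_neg hE2, if_pos hO2]
  by_cases ha1 : a = 1
  · -- l1 is all ones
    have hone : ∀ b ∈ l1, b = 1 := by
      intro b hb
      have h1 := hp1 b hb
      have h2 : b ≤ a := by rw [hadef, hOl]; exact Multiset.le_sup hb
      omega
    have hrep : l1 = Multiset.replicate (Multiset.card l1) 1 :=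
      Multiset.eq_replicate_card.mpr hone
    have hsum : l1.sum = Multiset.card l1 := by
      conv_lhs => rw [hrep]
      rw [Multiset.sum_replicate]; simp
    have hc1 : (phi l1).count 1 = Multiset.card l1 - 1 := by
      rw [hphi1, Multiset.count_cons, if_neg (by omega), ha1, Multiset.count_erase_self]
      rw [hrep, Multiset.count_replicate_self]
      simp
    have hc2 : (phi l2).count 1 = 1 := by
      rw [hphi2, Multiset.count_cons, if_pos rfl]
      have : (1:ℕ) ∉ l2 := fun hm =>
        (Nat.not_even_iff_odd.mpr odd_one) (all_even_of_no_odd hO2 _ hm)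
      rw [Multiset.count_eq_zero.mpr this]
    rw [heq, hc2] at hc1
    omega
  · have hmem := case1_amem h1 hl1 hE1
    rw [heq] at hmem
    rcases case2_mem hO2 hmem hE2 with h' | h'
    · exact ha1 h'
    · exact (Nat.not_even_iff_odd.mpr haodd) h'

lemma phi_ne_13 {l1 l2 : Multiset ℕ} (h1 : barOU l1) (hp1 : ∀ x ∈ l1, 0 < x) (hl1 : l1 ≠ 0)
    (hE1 : l1.filter Even = 0)
    (h2 : barOU l2) (hp2 : ∀ x ∈ l2, 0 < x) (hE2 : l2.filter Even ≠ 0)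
    (hO2 : l2.filter Odd ≠ 0) : phi l1 ≠ phi l2 := by
  intro heq
  have hallodd := all_odd_of_no_even hE1
  have hOl : l1.filter Odd = l1 := Multiset.filter_eq_self.mpr hallodd
  set a1 := (l1.filter Odd).sup with ha1def
  have ha1l : a1 ∈ l1 := by rw [ha1def, hOl]; exact sup_mem' hl1
  have ha1odd : Odd a1 := hallodd a1 ha1l
  have hphi1 : phi l1 = (a1 + 1) ::ₘ l1.erase a1 := by rw [phi, if_pos hE1]
  obtain ⟨ha2odd, ha2l, ha2max, hgt2, he2two, hcardE2, hea2, hca2⟩ := case3_facts h2 hp2 hE2 hO2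
  set a2 := (l2.filter Odd).sup with ha2def
  set e2 := (l2.filter Even).sup with he2def
  set M2 := a2 + e2 + Multiset.card (l2.filter Even) with hM2def
  have hphi2 : phi l2 = M2 ::ₘ
      (((l2.filter Odd).erase a2) + ((l2.filter Even).erase e2).map (· - 1)) := by
    rw [phi, if_neg hE2, if_neg hO2]
  -- members of phi l2 other than M2 are odd and ≤ a2; M2 is even
  have hmem2 : ∀ x ∈ phi l2, x = M2 ∨ (Odd x ∧ x ≤ a2) := by
    intro x hx
    rw [hphi2, Multiset.mem_cons, Multiset.mem_add] at hx
    rcases hx with rfl | hx' | hx'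
    · exact Or.inl rfl
    · have hxO : x ∈ l2.filter Odd := Multiset.mem_of_mem_erase hx'
      exact Or.inr ⟨(Multiset.mem_filter.mp hxO).2, Multiset.le_sup hxO⟩
    · obtain ⟨b, hb, rfl⟩ := Multiset.mem_map.mp hx'
      have hbE : b ∈ l2.filter Even := Multiset.mem_of_mem_erase hb
      have hbl : b ∈ l2 := (Multiset.mem_filter.mp hbE).1
      have hbe : Even b := (Multiset.mem_filter.mp hbE).2
      have h0 : 0 < b := hp2 b hbl
      obtain ⟨c, hc⟩ := hbe
      have hble : b ≤ e2 := by
        refine Multiset.le_sup (Multiset.mem_filter.mpr ⟨hbl, ⟨c, hc⟩⟩)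
      exact Or.inr ⟨Nat.Even.sub_odd (by omega) ⟨c, hc⟩ odd_one, by omega⟩
  have hM2even : Even M2 := (ha2odd.add_even (sup_mem' hE2 |> Multiset.mem_filter.mp |>.2)).add_odd hcardE2
  have hcardE2pos : 1 ≤ Multiset.card (l2.filter Even) := by
    have := Multiset.card_pos.mpr hE2; omega
  -- a1 + 1 is even and in phi l2, so a1 + 1 = M2
  have h11 : a1 + 1 ∈ phi l2 := by
    rw [← heq, hphi1]; exact Multiset.mem_cons_self _ _
  have hA : a1 + 1 = M2 := by
    rcases hmem2 _ h11 with h' | h'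
    · exact h'
    · exact absurd h'.1 (Nat.not_odd_iff_even.mpr ha1odd.add_one)
  -- a2 ∈ phi l1, a2 odd, so a2 ∈ l1.erase a1 hence a2 ≤ a1
  have ha2mem : a2 ∈ phi l1 := by rw [heq]; exact case3_amem h2 hp2 hE2 hO2
  have ha2le : a2 ≤ a1 := by
    rw [hphi1, Multiset.mem_cons] at ha2mem
    rcases ha2mem with h' | h'
    · exact absurd (h' ▸ ha2odd) (Nat.not_odd_iff_even.mpr ha1odd.add_one)
    · have : a2 ∈ l1 := Multiset.mem_of_mem_erase h'
      rw [ha1def, hOl]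
      exact Multiset.le_sup this
  -- a1 ∈ phi l2, a1 odd, a1 ≠ M2, so a1 ≤ a2
  have ha1mem : a1 ∈ phi l2 := by rw [← heq]; exact case1_amem h1 hl1 hE1
  have ha1le : a1 ≤ a2 := by
    rcases hmem2 _ ha1mem with h' | h'
    · exact absurd (h' ▸ ha1odd) (Nat.not_odd_iff_even.mpr hM2even)
    · exact h'.2
  omega

lemma phi_ne_23 {l1 l2 : Multiset ℕ} (hl1 : l1 ≠ 0)
    (hE1 : l1.filter Even ≠ 0) (hO1 : l1.filter Odd = 0)
    (h2 : barOU l2) (hp2 : ∀ x ∈ l2, 0 < x) (hE2 : l2.filter Even ≠ 0)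
    (hO2 : l2.filter Odd ≠ 0) : phi l1 ≠ phi l2 := by
  intro heq
  obtain ⟨ha2odd, ha2l, ha2max, hgt2, he2two, hcardE2, hea2, hca2⟩ := case3_facts h2 hp2 hE2 hO2
  have ha2mem : (l2.filter Odd).sup ∈ phi l1 := by rw [heq]; exact case3_amem h2 hp2 hE2 hO2
  rcases case2_mem hO1 ha2mem hE1 with h' | h'
  · omega
  · exact (Nat.not_even_iff_odd.mpr ha2odd) h'

lemma phi_inj_11 {l1 l2 : Multiset ℕ} (h1 : barOU l1) (hl1 : l1 ≠ 0) (hE1 : l1.filter Even = 0)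
    (h2 : barOU l2) (hl2 : l2 ≠ 0) (hE2 : l2.filter Even = 0)
    (heq : phi l1 = phi l2) : l1 = l2 := by
  have hallodd1 := all_odd_of_no_even hE1
  have hallodd2 := all_odd_of_no_even hE2
  have hOl1 : l1.filter Odd = l1 := Multiset.filter_eq_self.mpr hallodd1
  have hOl2 : l2.filter Odd = l2 := Multiset.filter_eq_self.mpr hallodd2
  set a1 := (l1.filter Odd).sup with ha1def
  set a2 := (l2.filter Odd).sup with ha2def
  have ha1l : a1 ∈ l1 := by rw [ha1def, hOl1]; exact sup_mem' hl1
  have ha2l : a2 ∈ l2 := by rw [ha2def, hOl2]; exact sup_mem' hl2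
  have hphi1 : phi l1 = (a1 + 1) ::ₘ l1.erase a1 := by rw [phi, if_pos hE1]
  have hphi2 : phi l2 = (a2 + 1) ::ₘ l2.erase a2 := by rw [phi, if_pos hE2]
  rw [hphi1, hphi2] at heq
  have ha12 : a1 = a2 := by
    have hmem : a1 + 1 ∈ (a2 + 1) ::ₘ l2.erase a2 := by
      rw [← heq]; exact Multiset.mem_cons_self _ _
    rw [Multiset.mem_cons] at hmem
    rcases hmem with h' | h'
    · omega
    · exact absurd ((hallodd1 a1 ha1l).add_one)
        (Nat.not_even_iff_odd.mpr (hallodd2 _ (Multiset.mem_of_mem_erase h')))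
  rw [← ha12] at heq ha2l
  rw [Multiset.cons_inj_right] at heq
  calc l1 = a1 ::ₘ l1.erase a1 := (Multiset.cons_erase ha1l).symm
    _ = a1 ::ₘ l2.erase a1 := by rw [heq]
    _ = l2 := Multiset.cons_erase ha2l

lemma phi_inj_22 {l1 l2 : Multiset ℕ} (hE1 : l1.filter Even ≠ 0) (hO1 : l1.filter Odd = 0)
    (hE2 : l2.filter Even ≠ 0) (hO2 : l2.filter Odd = 0)
    (heq : phi l1 = phi l2) : l1 = l2 := by
  have hphi1 : phi l1 = 1 ::ₘ l1 := by rw [phi, if_neg hE1, if_pos hO1]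
  have hphi2 : phi l2 = 1 ::ₘ l2 := by rw [phi, if_neg hE2, if_pos hO2]
  rw [hphi1, hphi2, Multiset.cons_inj_right] at heq
  exact heq

lemma phi_inj_33 {l1 l2 : Multiset ℕ} (h1 : barOU l1) (hp1 : ∀ x ∈ l1, 0 < x)
    (hE1 : l1.filter Even ≠ 0) (hO1 : l1.filter Odd ≠ 0)
    (h2 : barOU l2) (hp2 : ∀ x ∈ l2, 0 < x)
    (hE2 : l2.filter Even ≠ 0) (hO2 : l2.filter Odd ≠ 0)
    (heq : phi l1 = phi l2) : l1 = l2 := by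
  obtain ⟨ha1odd, ha1l, ha1max, hgt1, he1two, hcardE1, hea1, hca1⟩ := case3_facts h1 hp1 hE1 hO1
  obtain ⟨ha2odd, ha2l, ha2max, hgt2, he2two, hcardE2, hea2, hca2⟩ := case3_facts h2 hp2 hE2 hO2
  have hphi1 : phi l1 = ((l1.filter Odd).sup + (l1.filter Even).sup + Multiset.card (l1.filter Even)) ::ₘ
      (((l1.filter Odd).erase (l1.filter Odd).sup) +
        ((l1.filter Even).erase (l1.filter Even).sup).map (· - 1)) := by
    rw [phi, if_neg hE1, if_neg hO1]
  have hphi2 : phi l2 = ((l2.filter Odd).sup + (l2.filter Even).sup + Multiset.card (l2.filter Even)) ::ₘ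
      (((l2.filter Odd).erase (l2.filter Odd).sup) +
        ((l2.filter Even).erase (l2.filter Even).sup).map (· - 1)) := by
    rw [phi, if_neg hE2, if_neg hO2]
  set a1 := (l1.filter Odd).sup with ha1def
  set e1 := (l1.filter Even).sup with he1def
  set E1 := l1.filter Even with hE1def
  set O1 := l1.filter Odd with hO1def
  set a2 := (l2.filter Odd).sup with ha2def
  set e2 := (l2.filter Even).sup with he2def
  set E2 := l2.filter Even with hE2def
  set O2 := l2.filter Odd with hO2def
  set Er1 := E1.erase e1 with hEr1def
  set Or1 := O1.erase a1 with hOr1def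
  set Er2 := E2.erase e2 with hEr2def
  set Or2 := O2.erase a2 with hOr2def
  set m1 := Er1.map (· - 1) with hm1def
  set m2 := Er2.map (· - 1) with hm2def
  set M1 := a1 + e1 + Multiset.card E1 with hM1def
  set M2 := a2 + e2 + Multiset.card E2 with hM2def
  have he1E : e1 ∈ E1 := sup_mem' hE1
  have he2E : e2 ∈ E2 := sup_mem' hE2
  have ha1O : a1 ∈ O1 := sup_mem' hO1
  have ha2O : a2 ∈ O2 := sup_mem' hO2
  have he1even : Even e1 := (Multiset.mem_filter.mp he1E).2
  have he2even : Even e2 := (Multiset.mem_filter.mp he2E).2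
  -- facts about members of Or/m
  have hOrmem : ∀ (l : Multiset ℕ), ∀ x ∈ (l.filter Odd).erase (l.filter Odd).sup,
      Odd x ∧ x ≤ (l.filter Odd).sup ∧ x ∈ l := by
    intro l x hx
    have hxO : x ∈ l.filter Odd := Multiset.mem_of_mem_erase hx
    exact ⟨(Multiset.mem_filter.mp hxO).2, Multiset.le_sup hxO, (Multiset.mem_filter.mp hxO).1⟩
  have hmmem : ∀ (l : Multiset ℕ), (∀ x ∈ l, 0 < x) →
      ∀ x ∈ ((l.filter Even).erase (l.filter Even).sup).map (· - 1),
      Odd x ∧ x < (l.filter Even).sup ∧ x + 1 ∈ (l.filter Even).erase (l.filter Even).sup := by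
    intro l hp x hx
    obtain ⟨b, hb, rfl⟩ := Multiset.mem_map.mp hx
    have hbE : b ∈ l.filter Even := Multiset.mem_of_mem_erase hb
    have hbl : b ∈ l := (Multiset.mem_filter.mp hbE).1
    have hbe : Even b := (Multiset.mem_filter.mp hbE).2
    have h0 : 0 < b := hp b hbl
    obtain ⟨c, hc⟩ := hbe
    have hble : b ≤ (l.filter Even).sup := Multiset.le_sup hbE
    have hb1 : b - 1 + 1 = b := by omega
    refine ⟨Nat.Even.sub_odd (by omega) ⟨c, hc⟩ odd_one, by omega, by rw [hb1]; exact hb⟩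
  have hW2odd : ∀ x ∈ Or2 + m2, Odd x := by
    intro x hx
    rcases Multiset.mem_add.mp hx with hx' | hx'
    · exact (hOrmem l2 x hx').1
    · exact (hmmem l2 hp2 x hx').1
  have hW1odd : ∀ x ∈ Or1 + m1, Odd x := by
    intro x hx
    rcases Multiset.mem_add.mp hx with hx' | hx'
    · exact (hOrmem l1 x hx').1
    · exact (hmmem l1 hp1 x hx').1
  have hM1even : Even M1 := (ha1odd.add_even he1even).add_odd hcardE1
  have hM2even : Even M2 := (ha2odd.add_even he2even).add_odd hcardE2
  rw [hphi1, hphi2] at heq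
  -- step 1 : M1 = M2
  have hM : M1 = M2 := by
    have hmem : M1 ∈ M2 ::ₘ (Or2 + m2) := by rw [← heq]; exact Multiset.mem_cons_self _ _
    rcases Multiset.mem_cons.mp hmem with h' | h'
    · exact h'
    · exact absurd (hW2odd M1 h') (Nat.not_odd_iff_even.mpr hM1even)
  rw [hM, Multiset.cons_inj_right] at heq
  set W := Or1 + m1 with hWdef
  -- step 2 : a1 = a2
  have ha1W : a1 ∈ W := by
    refine Multiset.mem_add.mpr (Or.inl ?_)
    rw [← Multiset.count_pos, hOr1def, Multiset.count_erase_self, hO1def,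
      Multiset.count_filter_of_pos ha1odd]
    have hpos1 := Multiset.count_pos.mpr ha1l
    obtain ⟨k, hk⟩ := hca1; omega
  have ha2W : a2 ∈ W := by
    rw [heq]
    refine Multiset.mem_add.mpr (Or.inl ?_)
    rw [← Multiset.count_pos, hOr2def, Multiset.count_erase_self, hO2def,
      Multiset.count_filter_of_pos ha2odd]
    have hpos2 := Multiset.count_pos.mpr ha2l
    obtain ⟨k, hk⟩ := hca2; omega
  have ha12 : a1 = a2 := by
    have h1le : a1 ≤ a2 := by
      have := ha1W
      rw [heq] at this
      rcases Multiset.mem_add.mp this with h' | h'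
      · exact (hOrmem l2 a1 h').2.1
      · have := (hmmem l2 hp2 a1 h').2.1; omega
    have h2le : a2 ≤ a1 := by
      rcases Multiset.mem_add.mp ha2W with h' | h'
      · exact (hOrmem l1 a2 h').2.1
      · have := (hmmem l1 hp1 a2 h').2.1; omega
    omega
  -- step 3 : filter descriptions
  have hfil1 : W.filter (· < e1) = m1 := by
    rw [hWdef, Multiset.filter_add]
    have hz : Or1.filter (· < e1) = 0 := by
      rw [Multiset.filter_eq_nil]
      intro x hx
      have hxl : x ∈ l1 := (hOrmem l1 x hx).2.2
      have := hgt1 x hxl (hOrmem l1 x hx).1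
      omega
    have hs : m1.filter (· < e1) = m1 := by
      rw [Multiset.filter_eq_self]
      intro x hx
      exact (hmmem l1 hp1 x hx).2.1
    rw [hz, hs, zero_add]
  have hfil2 : W.filter (· < e2) = m2 := by
    rw [heq, Multiset.filter_add]
    have hz : Or2.filter (· < e2) = 0 := by
      rw [Multiset.filter_eq_nil]
      intro x hx
      have hxl : x ∈ l2 := (hOrmem l2 x hx).2.2
      have := hgt2 x hxl (hOrmem l2 x hx).1
      omega
    have hs : m2.filter (· < e2) = m2 := by
      rw [Multiset.filter_eq_self]
      intro x hx
      exact (hmmem l2 hp2 x hx).2.1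
    rw [hz, hs, zero_add]
  have hcards1 : Multiset.card E1 = Multiset.card m1 + 1 := by
    rw [hm1def, Multiset.card_map]
    conv_lhs => rw [← Multiset.cons_erase he1E]
    rw [Multiset.card_cons]
  have hcards2 : Multiset.card E2 = Multiset.card m2 + 1 := by
    rw [hm2def, Multiset.card_map]
    conv_lhs => rw [← Multiset.cons_erase he2E]
    rw [Multiset.card_cons]
  -- step 4 : e1 = e2
  have hkey : e1 + Multiset.card (W.filter (· < e1)) = e2 + Multiset.card (W.filter (· < e2)) := by
    rw [hfil1, hfil2]
    omega
  have he12 : e1 = e2 := by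
    rcases lt_trichotomy e1 e2 with h' | h' | h'
    · exfalso
      have hmono : W.filter (· < e1) ≤ W.filter (· < e2) :=
        Multiset.monotone_filter_right W (fun b hb => lt_trans hb h')
      have := Multiset.card_le_card hmono
      omega
    · exact h'
    · exfalso
      have hmono : W.filter (· < e2) ≤ W.filter (· < e1) :=
        Multiset.monotone_filter_right W (fun b hb => lt_trans hb h')
      have := Multiset.card_le_card hmono
      omega
  -- step 5 : all pieces equal
  have hm12 : m1 = m2 := by rw [← hfil1, ← hfil2, he12]
  have hOr12 : Or1 = Or2 := by
    have : Or1 + m1 = Or2 + m1 := by rw [hWdef] at heq; rw [heq, hm12]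
    exact add_right_cancel this
  have hEr12 : Er1 = Er2 := by
    have h1' : m1.map (· + 1) = Er1 := map_pred_succ (fun b hb => by
      have hbE : b ∈ E1 := Multiset.mem_of_mem_erase hb
      exact hp1 b (Multiset.mem_filter.mp hbE).1)
    have h2' : m2.map (· + 1) = Er2 := map_pred_succ (fun b hb => by
      have hbE : b ∈ E2 := Multiset.mem_of_mem_erase hb
      exact hp2 b (Multiset.mem_filter.mp hbE).1)
    rw [← h1', ← h2', hm12]
  have hE12 : E1 = E2 := by
    calc E1 = e1 ::ₘ Er1 := (Multiset.cons_erase he1E).symm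
      _ = e2 ::ₘ Er2 := by rw [he12, hEr12]
      _ = E2 := Multiset.cons_erase he2E
  have hO12 : O1 = O2 := by
    calc O1 = a1 ::ₘ Or1 := (Multiset.cons_erase ha1O).symm
      _ = a2 ::ₘ Or2 := by rw [ha12, hOr12]
      _ = O2 := Multiset.cons_erase ha2O
  calc l1 = E1 + O1 := (even_add_odd_filter l1).symm
    _ = E2 + O2 := by rw [hE12, hO12]
    _ = l2 := even_add_odd_filter l2

lemma phi_inj {l1 l2 : Multiset ℕ} (h1 : barOU l1) (hp1 : ∀ x ∈ l1, 0 < x)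
    (h2 : barOU l2) (hp2 : ∀ x ∈ l2, 0 < x)
    (hs1 : 6 ≤ l1.sum) (hs2 : 6 ≤ l2.sum)
    (heq : phi l1 = phi l2) : l1 = l2 := by
  have hl1 : l1 ≠ 0 := by rintro rfl; simp at hs1
  have hl2 : l2 ≠ 0 := by rintro rfl; simp at hs2
  by_cases hE1 : l1.filter Even = 0
  · by_cases hE2 : l2.filter Even = 0
    · exact phi_inj_11 h1 hl1 hE1 h2 hl2 hE2 heq
    · by_cases hO2 : l2.filter Odd = 0
      · exact absurd heq (phi_ne_12 h1 hp1 hl1 hE1 hl2 hE2 hO2 hs1)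
      · exact absurd heq (phi_ne_13 h1 hp1 hl1 hE1 h2 hp2 hE2 hO2)
  · by_cases hO1 : l1.filter Odd = 0
    · by_cases hE2 : l2.filter Even = 0
      · exact absurd heq.symm (phi_ne_12 h2 hp2 hl2 hE2 hl1 hE1 hO1 hs2)
      · by_cases hO2 : l2.filter Odd = 0
        · exact phi_inj_22 hE1 hO1 hE2 hO2 heq
        · exact absurd heq (phi_ne_23 hl1 hE1 hO1 h2 hp2 hE2 hO2)
    · by_cases hE2 : l2.filter Even = 0
      · exact absurd heq.symm (phi_ne_13 h2 hp2 hl2 hE2 h1 hp1 hE1 hO1)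
      · by_cases hO2 : l2.filter Odd = 0
        · exact absurd heq.symm (phi_ne_23 hl2 hE2 hO2 h1 hp1 hE1 hO1)
        · exact phi_inj_33 h1 hp1 hE1 hO1 h2 hp2 hE2 hO2 heq

def wit (n : ℕ) : Multiset ℕ := 4 ::ₘ Multiset.replicate (2*n-3) 1

lemma wit_mem {n x : ℕ} (hx : x ∈ wit n) : x = 4 ∨ x = 1 := by
  rcases Multiset.mem_cons.mp hx with h | h
  · exact Or.inl h
  · exact Or.inr (Multiset.eq_of_mem_replicate h)

lemma wit_pos (n : ℕ) : ∀ x ∈ wit n, 0 < x := by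
  intro x hx; rcases wit_mem hx with rfl | rfl <;> omega

lemma wit_sum {n : ℕ} (hn : 3 ≤ n) : (wit n).sum = 2*n+1 := by
  rw [wit, Multiset.sum_cons, Multiset.sum_replicate]
  simp; omega

lemma wit_count1 {n : ℕ} : (wit n).count 1 = 2*n-3 := by
  rw [wit, Multiset.count_cons, if_neg (by omega), Multiset.count_replicate_self]
  simp

lemma wit_count4 {n : ℕ} : (wit n).count 4 = 1 := by
  rw [wit, Multiset.count_cons, if_pos rfl, Multiset.count_replicate, if_neg (by omega)]

lemma wit_barEU {n : ℕ} (hn : 3 ≤ n) : barEU (wit n) := by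
  have h2n : 1 ≤ 2*n-3 := by omega
  have h1mem : (1 : ℕ) ∈ wit n :=
    Multiset.mem_cons_of_mem (Multiset.mem_replicate.mpr ⟨by omega, rfl⟩)
  refine ⟨?_, 4, Multiset.mem_cons_self _ _, 1, h1mem, (by decide), odd_one, ?_, ?_, ?_, ?_, ?_⟩
  · intro x hx y hy hxe hyo
    rcases wit_mem hx with rfl | rfl
    · rcases wit_mem hy with rfl | rfl
      · exact absurd hyo (by decide)
      · omega
    · exact absurd hxe (by decide)
  · intro b hb hbe
    rcases wit_mem hb with rfl | rfl
    · exact le_refl _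
    · exact absurd hbe (by decide)
  · intro b hb hbo
    rcases wit_mem hb with rfl | rfl
    · exact absurd hbo (by decide)
    · exact le_refl _
  · rw [wit_count4]; exact odd_one
  · rw [wit_count1]; exact ⟨n - 2, by omega⟩
  · intro a ha ha4 ha1
    rcases wit_mem ha with rfl | rfl
    · exact absurd rfl ha4
    · exact absurd rfl ha1

lemma wit_not_image {l : Multiset ℕ} {n : ℕ} (h : barOU l) (hpos : ∀ x ∈ l, 0 < x)
    (hn : 3 ≤ n) (hsum : l.sum = 2*n) : phi l ≠ wit n := by
  have hl : l ≠ 0 := by rintro rfl; simp at hsum; omega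
  intro heq
  by_cases hE : l.filter Even = 0
  · -- case 1
    have hallodd := all_odd_of_no_even hE
    have hOl : l.filter Odd = l := Multiset.filter_eq_self.mpr hallodd
    set a := (l.filter Odd).sup with hadef
    have hal : a ∈ l := by rw [hadef, hOl]; exact sup_mem' hl
    have hpa : 0 < a := hpos a hal
    have hphi : phi l = (a + 1) ::ₘ l.erase a := by rw [phi, if_pos hE]
    have hmem : a + 1 ∈ wit n := by rw [← heq, hphi]; exact Multiset.mem_cons_self _ _
    have ha3 : a = 3 := by rcases wit_mem hmem with h' | h' <;> omega
    have hamem : a ∈ wit n := by rw [← heq]; exact case1_amem h hl hE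
    rcases wit_mem hamem with h' | h' <;> omega
  · by_cases hO : l.filter Odd = 0
    · -- case 2
      have hphi : phi l = 1 ::ₘ l := by rw [phi, if_neg hE, if_pos hO]
      have h1notin : (1 : ℕ) ∉ l := fun hm =>
        (Nat.not_even_iff_odd.mpr odd_one) (all_even_of_no_odd hO _ hm)
      have hc : (phi l).count 1 = 1 := by
        rw [hphi, Multiset.count_cons, if_pos rfl, Multiset.count_eq_zero.mpr h1notin]
      rw [heq, wit_count1] at hc
      omega
    · -- case 3
      obtain ⟨haodd, hal, hamax, hgt, he2, hcardE, hea, hca⟩ := case3_facts h hpos hE hO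
      have hamem : (l.filter Odd).sup ∈ wit n := by
        rw [← heq]; exact case3_amem h hpos hE hO
      rcases wit_mem hamem with h' | h'
      · rw [h'] at haodd; exact absurd haodd (by decide)
      · omega

theorem stmt9 (n : ℕ) (hn : 3 ≤ n) :
    pcount (2 * n) barOU < pcount (2 * n + 1) barEU := by
  classical
  have key : ∀ (p : Nat.Partition (2*n)), barOU p.parts →
      barEU (phi p.parts) ∧ (phi p.parts).sum = 2*n+1 ∧ ∀ x ∈ phi p.parts, 0 < x := by
    intro p hp
    have hpos : ∀ x ∈ p.parts, 0 < x := fun x hx => p.parts_pos hx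
    have hne : p.parts ≠ 0 := by
      intro h0
      have hs := p.parts_sum
      rw [h0] at hs
      simp at hs
      omega
    obtain ⟨h1, h2, h3⟩ := phi_spec hp hpos hne
    exact ⟨h1, by rw [h2, p.parts_sum], h3⟩
  let F : {p : Nat.Partition (2*n) // barOU p.parts} → {p : Nat.Partition (2*n+1) // barEU p.parts} :=
    fun q => ⟨⟨phi q.1.parts, fun {i} hi => (key q.1 q.2).2.2 i hi, (key q.1 q.2).2.1⟩,
      (key q.1 q.2).1⟩
  have hFinj : Function.Injective F := by
    intro q1 q2 h
    have hparts : phi q1.1.parts = phi q2.1.parts := congrArg (fun r => r.1.parts) h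
    have hs1 : 6 ≤ q1.1.parts.sum := by rw [q1.1.parts_sum]; omega
    have hs2 : 6 ≤ q2.1.parts.sum := by rw [q2.1.parts_sum]; omega
    have heq := phi_inj q1.2 (fun x hx => q1.1.parts_pos hx) q2.2
      (fun x hx => q2.1.parts_pos hx) hs1 hs2 hparts
    exact Subtype.ext (Nat.Partition.ext heq)
  let w : Nat.Partition (2*n+1) := ⟨wit n, fun {i} hi => wit_pos n i hi, wit_sum hn⟩
  have hw : (⟨w, wit_barEU hn⟩ : {p : Nat.Partition (2*n+1) // barEU p.parts}) ∉ Set.range F := by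
    rintro ⟨q, hq⟩
    have hparts : phi q.1.parts = wit n := congrArg (fun r => r.1.parts) hq
    exact wit_not_image q.2 (fun x hx => q.1.parts_pos hx) hn q.1.parts_sum hparts
  rw [pcount, pcount, Nat.card_eq_fintype_card, Nat.card_eq_fintype_card]
  exact Fintype.card_lt_of_injective_of_notMem F hFinj hw
end

section
/- For every k ≥ 0, the number of partitions of 2k in which every odd part exceeds every even part (no distinctness restrictions) equals the number of partitions of 2k+1 in which every odd part exceeds every even part. -/
namespace Stmt10Aux

lemma sup_mem_of_ne_zero {t : Multiset ℕ} (h : t ≠ 0) : t.sup ∈ t := by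
  induction t using Multiset.induction with
  | empty => simp at h
  | cons a t ih =>
    rw [Multiset.sup_cons]
    rcases eq_or_ne t 0 with rfl | ht
    · simp
    · rcases le_total a t.sup with h1 | h1
      · rw [sup_eq_right.mpr h1]
        exact Multiset.mem_cons_of_mem (ih ht)
      · rw [sup_eq_left.mpr h1]; exact Multiset.mem_cons_self a t

lemma exists_odd_of_odd_sum {s : Multiset ℕ} (h : Odd s.sum) : ∃ x, Odd x ∧ x ∈ s := by
  induction s using Multiset.induction with
  | empty => simp at h
  | cons a t ih =>
    rw [Multiset.sum_cons] at h
    rcases Nat.even_or_odd a with ha | ha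
    · rcases Nat.even_or_odd t.sum with ht | ht
      · exact absurd (ha.add ht) (Nat.not_even_iff_odd.mpr h)
      · obtain ⟨x, hx, hxm⟩ := ih ht
        exact ⟨x, hx, Multiset.mem_cons_of_mem hxm⟩
    · exact ⟨a, ha, Multiset.mem_cons_self a t⟩

/-- forward map: 2k → 2k+1 -/
def f (s : Multiset ℕ) : Multiset ℕ :=
  if (s.filter Even) = 0 then 1 ::ₘ s
  else ((s.filter Even).sup + 1) ::ₘ s.erase ((s.filter Even).sup)

instance decEx (s : Multiset ℕ) : Decidable (∃ x, Odd x ∧ x ∈ s) :=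
  decidable_of_iff (¬ s.filter Odd = 0) (by
    rw [Multiset.filter_eq_nil]
    push_neg
    exact ⟨fun ⟨x, h1, h2⟩ => ⟨x, h2, h1⟩, fun ⟨x, h1, h2⟩ => ⟨x, h2, h1⟩⟩)

/-- backward map -/
def g (s : Multiset ℕ) : Multiset ℕ :=
  if h : ∃ x, Odd x ∧ x ∈ s then
    if Nat.find h = 1 then s.erase 1
    else (Nat.find h - 1) ::ₘ s.erase (Nat.find h)
  else s

lemma f_sum (s : Multiset ℕ) : (f s).sum = s.sum + 1 := by
  unfold f
  split_ifs with h
  · rw [Multiset.sum_cons]; omega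
  · set e := (s.filter Even).sup with he
    have hem : e ∈ s := (Multiset.mem_filter.1 (sup_mem_of_ne_zero h)).1
    have := Multiset.cons_erase hem
    have hs : e + (s.erase e).sum = s.sum := by
      conv_rhs => rw [← this]
      rw [Multiset.sum_cons]
    rw [Multiset.sum_cons]
    omega

lemma f_pos {s : Multiset ℕ} (hpos : ∀ x ∈ s, 0 < x) : ∀ x ∈ f s, 0 < x := by
  intro x hx
  unfold f at hx
  split_ifs at hx with h
  · rcases Multiset.mem_cons.1 hx with rfl | hx
    · norm_num
    · exact hpos x hx
  · rcases Multiset.mem_cons.1 hx with rfl | hx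
    · omega
    · exact hpos x (Multiset.mem_of_mem_erase hx)

lemma f_oddAbove {s : Multiset ℕ} (hodd : oddAbove s) : oddAbove (f s) := by
  unfold f
  split_ifs with h
  · intro a ha b hb hao hbe
    rcases Multiset.mem_cons.1 hb with rfl | hb
    · exact absurd hbe (by decide)
    · exact absurd (Multiset.mem_filter.2 ⟨hb, hbe⟩) (by simp [h])
  · set e := (s.filter Even).sup with hedef
    have hmf := sup_mem_of_ne_zero h
    have hem : e ∈ s := (Multiset.mem_filter.1 hmf).1
    have hee : Even e := (Multiset.mem_filter.1 hmf).2
    have heo : Odd (e + 1) := hee.add_one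
    intro a ha b hb hao hbe
    have hb' : b ∈ s.erase e := by
      rcases Multiset.mem_cons.1 hb with rfl | hb
      · exact absurd hbe (Nat.not_even_iff_odd.mpr heo)
      · exact hb
    have hbs : b ∈ s := Multiset.mem_of_mem_erase hb'
    have hble : b ≤ e := Multiset.le_sup (Multiset.mem_filter.2 ⟨hbs, hbe⟩)
    rcases Multiset.mem_cons.1 ha with rfl | ha
    · omega
    · exact hodd a (Multiset.mem_of_mem_erase ha) b hbs hao hbe

lemma gf {s : Multiset ℕ} (hodd : oddAbove s) (hpos : ∀ x ∈ s, 0 < x) : g (f s) = s := by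
  unfold f
  split_ifs with h
  · have hex : ∃ x, Odd x ∧ x ∈ (1 ::ₘ s) := ⟨1, odd_one, Multiset.mem_cons_self 1 s⟩
    unfold g
    rw [dif_pos hex]
    have hfind : Nat.find hex = 1 := by
      refine le_antisymm (Nat.find_le ⟨odd_one, Multiset.mem_cons_self 1 s⟩) ?_
      have := (Nat.find_spec hex).1
      rcases Nat.eq_zero_or_pos (Nat.find hex) with h0 | h0
      · rw [h0] at this; exact absurd this (by decide)
      · exact h0
    rw [if_pos hfind, Multiset.erase_cons_head]
  · set e := (s.filter Even).sup with hedef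
    have hmf := sup_mem_of_ne_zero h
    have hem : e ∈ s := (Multiset.mem_filter.1 hmf).1
    have hee : Even e := (Multiset.mem_filter.1 hmf).2
    have hepos : 0 < e := hpos e hem
    have he2 : 2 ≤ e := by obtain ⟨c, hc⟩ := hee; omega
    have heo : Odd (e + 1) := hee.add_one
    have hex : ∃ x, Odd x ∧ x ∈ ((e + 1) ::ₘ s.erase e) :=
      ⟨e + 1, heo, Multiset.mem_cons_self _ _⟩
    unfold g
    rw [dif_pos hex]
    have hfind : Nat.find hex = e + 1 := by
      refine le_antisymm (Nat.find_le ⟨heo, Multiset.mem_cons_self _ _⟩) ?_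
      obtain ⟨hfo, hfm⟩ := Nat.find_spec hex
      rcases Multiset.mem_cons.1 hfm with hq | hq
      · omega
      · have : e < Nat.find hex :=
          hodd _ (Multiset.mem_of_mem_erase hq) e hem hfo hee
        omega
    have hne : Nat.find hex ≠ 1 := by omega
    rw [if_neg hne, hfind, Multiset.erase_cons_head]
    simp only [Nat.add_sub_cancel]
    exact Multiset.cons_erase hem

lemma fg {s : Multiset ℕ} (hodd : oddAbove s) (hpos : ∀ x ∈ s, 0 < x)
    (hex : ∃ x, Odd x ∧ x ∈ s) : f (g s) = s := by
  unfold g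
  rw [dif_pos hex]
  obtain ⟨hmo, hmm⟩ := Nat.find_spec hex
  set m := Nat.find hex with hmdef
  split_ifs with h1
  · have hfe : (s.erase 1).filter Even = 0 := by
      rw [Multiset.filter_eq_nil]
      intro b hb hbe
      have hbs : b ∈ s := Multiset.mem_of_mem_erase hb
      have : b < 1 := hodd 1 (h1 ▸ hmm) b hbs odd_one hbe
      have := hpos b hbs
      omega
    unfold f
    rw [if_pos hfe]
    exact Multiset.cons_erase (h1 ▸ hmm)
  · have hm1 : 1 ≤ m := hmo.pos
    have hm3 : 3 ≤ m := by
      rcases hmo with ⟨c, hc⟩; omega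
    have hm1e : Even (m - 1) := by
      rcases hmo with ⟨c, hc⟩
      exact ⟨c, by omega⟩
    set t := (m - 1) ::ₘ s.erase m with htdef
    have hmem : (m - 1) ∈ t.filter Even :=
      Multiset.mem_filter.2 ⟨Multiset.mem_cons_self _ _, hm1e⟩
    have hne : t.filter Even ≠ 0 := fun hq => by simp [hq] at hmem
    have hsup : (t.filter Even).sup = m - 1 := by
      refine le_antisymm (Multiset.sup_le.2 ?_) (Multiset.le_sup hmem)
      intro b hb
      obtain ⟨hbt, hbe⟩ := Multiset.mem_filter.1 hb
      rcases Multiset.mem_cons.1 hbt with rfl | hbt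
      · exact le_rfl
      · have : b < m := hodd m hmm b (Multiset.mem_of_mem_erase hbt) hmo hbe
        omega
    unfold f
    rw [if_neg hne, hsup]
    have : m - 1 + 1 = m := by omega
    rw [this, htdef, Multiset.erase_cons_head]
    exact Multiset.cons_erase hmm

lemma g_sum {s : Multiset ℕ} (hex : ∃ x, Odd x ∧ x ∈ s) : (g s).sum + 1 = s.sum := by
  unfold g
  rw [dif_pos hex]
  obtain ⟨hmo, hmm⟩ := Nat.find_spec hex
  set m := Nat.find hex with hmdef
  have hsum : m + (s.erase m).sum = s.sum := by
    conv_rhs => rw [← Multiset.cons_erase hmm]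
    rw [Multiset.sum_cons]
  split_ifs with h1
  · rw [h1] at hsum; omega
  · have := hmo.pos
    rw [Multiset.sum_cons]
    omega

lemma g_pos {s : Multiset ℕ} (hpos : ∀ x ∈ s, 0 < x)
    (hex : ∃ x, Odd x ∧ x ∈ s) : ∀ x ∈ g s, 0 < x := by
  unfold g
  rw [dif_pos hex]
  obtain ⟨hmo, hmm⟩ := Nat.find_spec hex
  set m := Nat.find hex with hmdef
  split_ifs with h1
  · exact fun x hx => hpos x (Multiset.mem_of_mem_erase hx)
  · have hm3 : 3 ≤ m := by rcases hmo with ⟨c, hc⟩; omega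
    intro x hx
    rcases Multiset.mem_cons.1 hx with rfl | hx
    · omega
    · exact hpos x (Multiset.mem_of_mem_erase hx)

lemma g_oddAbove {s : Multiset ℕ} (hodd : oddAbove s)
    (hex : ∃ x, Odd x ∧ x ∈ s) : oddAbove (g s) := by
  unfold g
  rw [dif_pos hex]
  obtain ⟨hmo, hmm⟩ := Nat.find_spec hex
  set m := Nat.find hex with hmdef
  split_ifs with h1
  · intro a ha b hb hao hbe
    exact hodd a (Multiset.mem_of_mem_erase ha) b (Multiset.mem_of_mem_erase hb) hao hbe
  · intro a ha b hb hao hbe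
    have hm1e : Even (m - 1) := by rcases hmo with ⟨c, hc⟩; exact ⟨c, by omega⟩
    have hao' : a ≠ m - 1 := fun hq => by
      rw [hq] at hao; exact (Nat.not_odd_iff_even.mpr hm1e) hao
    have has : a ∈ s.erase m := by
      rcases Multiset.mem_cons.1 ha with rfl | ha
      · exact absurd rfl hao'
      · exact ha
    have has' : a ∈ s := Multiset.mem_of_mem_erase has
    have ham : m ≤ a := Nat.find_le ⟨hao, has'⟩
    rcases Multiset.mem_cons.1 hb with rfl | hb
    · omega
    · exact hodd a has' b (Multiset.mem_of_mem_erase hb) hao hbe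

end Stmt10Aux

namespace Stmt10Aux

def F (k : ℕ) (x : {p : Nat.Partition (2 * k) // oddAbove p.parts}) :
    {p : Nat.Partition (2 * k + 1) // oddAbove p.parts} :=
  ⟨⟨f x.1.parts,
    fun {i} hi => f_pos (fun y hy => x.1.parts_pos hy) i hi,
    by rw [f_sum, x.1.parts_sum]⟩,
   f_oddAbove x.2⟩

theorem hexOf (k : ℕ) (y : {p : Nat.Partition (2 * k + 1) // oddAbove p.parts}) :
    ∃ x, Odd x ∧ x ∈ y.1.parts :=
  exists_odd_of_odd_sum (by rw [y.1.parts_sum]; exact ⟨k, rfl⟩)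

def G (k : ℕ) (y : {p : Nat.Partition (2 * k + 1) // oddAbove p.parts}) :
    {p : Nat.Partition (2 * k) // oddAbove p.parts} :=
  ⟨⟨g y.1.parts,
    fun {i} hi => g_pos (fun a ha => y.1.parts_pos ha) (hexOf k y) i hi,
    by have := g_sum (hexOf k y); rw [y.1.parts_sum] at this; omega⟩,
   g_oddAbove y.2 (hexOf k y)⟩

end Stmt10Aux

theorem stmt10 (k : ℕ) :
    pcount (2 * k) oddAbove = pcount (2 * k + 1) oddAbove := by
  apply Nat.card_congr
  refine ⟨Stmt10Aux.F k, Stmt10Aux.G k, fun x => ?_, fun y => ?_⟩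
  · apply Subtype.ext
    apply Nat.Partition.ext
    exact Stmt10Aux.gf x.2 (fun a ha => x.1.parts_pos ha)
  · apply Subtype.ext
    apply Nat.Partition.ext
    exact Stmt10Aux.fg y.2 (fun a ha => y.1.parts_pos ha) (Stmt10Aux.hexOf k y)
end

section
/- For every k ≥ 1, the number of partitions of 2k−1 in which every odd part exceeds every even part is strictly less than the number of such partitions of 2k. -/
/-! Auxiliary machinery: the "step" map adding 1 to the size of a partition
while preserving `oddAbove`. -/

/-- The even parts. -/
def evensOf (p : Multiset ℕ) : Multiset ℕ := p.filter (fun x => Even x)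

/-- The largest even part, when an even part exists. -/
noncomputable def maxEven (p : Multiset ℕ) (h : evensOf p ≠ 0) : ℕ :=
  (evensOf p).toFinset.max' (by rwa [Multiset.toFinset_nonempty])

lemma maxEven_mem (p : Multiset ℕ) (h : evensOf p ≠ 0) :
    maxEven p h ∈ p ∧ Even (maxEven p h) := by
  have hm : maxEven p h ∈ evensOf p := by
    have := Finset.max'_mem (evensOf p).toFinset
      (by rwa [Multiset.toFinset_nonempty] : (evensOf p).toFinset.Nonempty)
    rwa [Multiset.mem_toFinset] at this
  simpa [evensOf, Multiset.mem_filter] using hm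

lemma le_maxEven (p : Multiset ℕ) (h : evensOf p ≠ 0) {x : ℕ}
    (hx : x ∈ p) (hex : Even x) : x ≤ maxEven p h := by
  apply Finset.le_max'
  rw [Multiset.mem_toFinset]
  simp [evensOf, Multiset.mem_filter, hx, hex]

/-- If the partition has an even part, replace one copy of its maximal even part `e`
by `e + 1`; otherwise add a part `1`. -/
noncomputable def step (p : Multiset ℕ) : Multiset ℕ :=
  if h : evensOf p = 0 then 1 ::ₘ p
  else (maxEven p h + 1) ::ₘ p.erase (maxEven p h)

lemma step_sum (p : Multiset ℕ) : (step p).sum = p.sum + 1 := by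
  unfold step
  split_ifs with h
  · rw [Multiset.sum_cons]; omega
  · have hm := (maxEven_mem p h).1
    have hc := Multiset.cons_erase hm
    have hs : maxEven p h + (p.erase (maxEven p h)).sum = p.sum := by
      conv_rhs => rw [← hc]
      rw [Multiset.sum_cons]
    rw [Multiset.sum_cons]
    omega

lemma step_pos (p : Multiset ℕ) (hp : ∀ x ∈ p, 0 < x) :
    ∀ x ∈ step p, 0 < x := by
  intro x hx
  unfold step at hx
  split_ifs at hx with h
  · rcases Multiset.mem_cons.1 hx with rfl | hx
    · omega
    · exact hp x hx
  · rcases Multiset.mem_cons.1 hx with rfl | hx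
    · omega
    · exact hp x (Multiset.mem_of_mem_erase hx)

lemma step_oddAbove (p : Multiset ℕ) (hp : oddAbove p) : oddAbove (step p) := by
  unfold step
  split_ifs with h
  · have hall : ∀ a ∈ p, ¬ Even a := Multiset.filter_eq_nil.1 h
    intro a _ b hb _ heb
    exfalso
    rcases Multiset.mem_cons.1 hb with rfl | hb
    · exact (Nat.not_even_one) heb
    · exact hall b hb heb
  · have heE := (maxEven_mem p h).2
    intro a ha b hb hoa heb
    rcases Multiset.mem_cons.1 hb with rfl | hb
    · exfalso
      rcases heE with ⟨m, hm⟩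
      rcases heb with ⟨m', hm'⟩
      omega
    · have hbp : b ∈ p := Multiset.mem_of_mem_erase hb
      have hble : b ≤ maxEven p h := le_maxEven p h hbp heb
      rcases Multiset.mem_cons.1 ha with rfl | ha
      · omega
      · exact hp a (Multiset.mem_of_mem_erase ha) b hbp hoa heb

lemma aux_le (p q : Multiset ℕ) (h1 : evensOf p ≠ 0) (h2 : evensOf q ≠ 0)
    (hoq : oddAbove q)
    (heq : (maxEven p h1 + 1) ::ₘ p.erase (maxEven p h1)
         = (maxEven q h2 + 1) ::ₘ q.erase (maxEven q h2)) :
    maxEven q h2 ≤ maxEven p h1 := by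
  have hmem : maxEven p h1 + 1 ∈ (maxEven q h2 + 1) ::ₘ q.erase (maxEven q h2) := by
    rw [← heq]; exact Multiset.mem_cons_self _ _
  rcases Multiset.mem_cons.1 hmem with h | h
  · omega
  · have hq' : maxEven p h1 + 1 ∈ q := Multiset.mem_of_mem_erase h
    have hodd : Odd (maxEven p h1 + 1) := Even.add_one (maxEven_mem p h1).2
    have := hoq _ hq' _ (maxEven_mem q h2).1 hodd (maxEven_mem q h2).2
    omega

lemma step_inj (p q : Multiset ℕ) (hp : ∀ x ∈ p, 0 < x) (hq : ∀ x ∈ q, 0 < x)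
    (hop : oddAbove p) (hoq : oddAbove q) (heq : step p = step q) : p = q := by
  by_cases h1 : evensOf p = 0 <;> by_cases h2 : evensOf q = 0
  · rw [step, step, dif_pos h1, dif_pos h2] at heq
    exact (Multiset.cons_inj_right 1).1 heq
  · exfalso
    rw [step, step, dif_pos h1, dif_neg h2] at heq
    have hmem : (1 : ℕ) ∈ (maxEven q h2 + 1) ::ₘ q.erase (maxEven q h2) := by
      rw [← heq]; exact Multiset.mem_cons_self _ _
    have hqpos : 0 < maxEven q h2 := hq _ (maxEven_mem q h2).1
    rcases Multiset.mem_cons.1 hmem with h | h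
    · omega
    · have h1q : (1 : ℕ) ∈ q := Multiset.mem_of_mem_erase h
      have := hoq 1 h1q _ (maxEven_mem q h2).1 odd_one (maxEven_mem q h2).2
      omega
  · exfalso
    rw [step, step, dif_neg h1, dif_pos h2] at heq
    have hmem : (1 : ℕ) ∈ (maxEven p h1 + 1) ::ₘ p.erase (maxEven p h1) := by
      rw [heq]; exact Multiset.mem_cons_self _ _
    have hppos : 0 < maxEven p h1 := hp _ (maxEven_mem p h1).1
    rcases Multiset.mem_cons.1 hmem with h | h
    · omega
    · have h1p : (1 : ℕ) ∈ p := Multiset.mem_of_mem_erase h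
      have := hop 1 h1p _ (maxEven_mem p h1).1 odd_one (maxEven_mem p h1).2
      omega
  · rw [step, step, dif_neg h1, dif_neg h2] at heq
    have hle1 := aux_le p q h1 h2 hoq heq
    have hle2 := aux_le q p h2 h1 hop heq.symm
    have he : maxEven p h1 = maxEven q h2 := le_antisymm hle2 hle1
    rw [he] at heq
    have herase : p.erase (maxEven q h2) = q.erase (maxEven q h2) :=
      (Multiset.cons_inj_right _).1 heq
    have hpm : maxEven q h2 ∈ p := he ▸ (maxEven_mem p h1).1
    calc p = maxEven q h2 ::ₘ p.erase (maxEven q h2) := (Multiset.cons_erase hpm).symm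
      _ = maxEven q h2 ::ₘ q.erase (maxEven q h2) := by rw [herase]
      _ = q := Multiset.cons_erase (maxEven_mem q h2).1

theorem stmt11 (k : ℕ) (hk : 1 ≤ k) :
    pcount (2 * k - 1) oddAbove < pcount (2 * k) oddAbove := by
  classical
  -- the injection on partitions
  let f : {p : Nat.Partition (2 * k - 1) // oddAbove p.parts} →
      {p : Nat.Partition (2 * k) // oddAbove p.parts} :=
    fun x => ⟨⟨step x.1.parts,
      fun hi => step_pos x.1.parts (fun y hy => x.1.parts_pos hy) _ hi,
      by
        rw [step_sum, x.1.parts_sum]; omega⟩,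
      step_oddAbove x.1.parts x.2⟩
  have hinj : Function.Injective f := by
    intro x y hxy
    have hparts : step x.1.parts = step y.1.parts := by
      have := congrArg (fun z => z.1.parts) hxy
      simpa [f] using this
    have := step_inj x.1.parts y.1.parts
      (fun a ha => x.1.parts_pos ha) (fun a ha => y.1.parts_pos ha)
      x.2 y.2 hparts
    exact Subtype.ext (Nat.Partition.ext this)
  -- the witness partition {2k}, not in the range of f
  have hb0odd : oddAbove ({2 * k} : Multiset ℕ) := by
    intro a ha b hb hoa heb
    rw [Multiset.mem_singleton] at ha
    rcases hoa with ⟨m, hm⟩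
    omega
  let b0 : {p : Nat.Partition (2 * k) // oddAbove p.parts} :=
    ⟨⟨({2 * k} : Multiset ℕ),
      by intro i hi; rw [Multiset.mem_singleton] at hi; omega,
      by simp⟩, hb0odd⟩
  have hb0 : b0 ∉ Set.range f := by
    rintro ⟨x, hx⟩
    have hparts : step x.1.parts = ({2 * k} : Multiset ℕ) := by
      have := congrArg (fun z => z.1.parts) hx
      simpa [f, b0] using this
    unfold step at hparts
    split_ifs at hparts with h
    · have : (1 : ℕ) ∈ ({2 * k} : Multiset ℕ) := by
        rw [← hparts]; exact Multiset.mem_cons_self _ _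
      rw [Multiset.mem_singleton] at this
      omega
    · have hmem : maxEven x.1.parts h + 1 ∈ ({2 * k} : Multiset ℕ) := by
        rw [← hparts]; exact Multiset.mem_cons_self _ _
      rw [Multiset.mem_singleton] at hmem
      rcases (maxEven_mem x.1.parts h).2 with ⟨m, hm⟩
      omega
  haveI : Fintype {p : Nat.Partition (2 * k - 1) // oddAbove p.parts} :=
    Fintype.ofFinite _
  haveI : Fintype {p : Nat.Partition (2 * k) // oddAbove p.parts} :=
    Fintype.ofFinite _
  rw [pcount, pcount, Nat.card_eq_fintype_card, Nat.card_eq_fintype_card]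
  exact Fintype.card_lt_of_injective_of_notMem f hinj hb0
end

section
/- The map sending a partition λ (with every odd part greater than every even part, odd parts distinct, even parts distinct) to the partition obtained by adding 1 to each of the first m parts and subtracting 1 from each of the last m parts, where m is the minimum of the number of odd parts and the number of even parts (and fixing λ if it has parts of only one parity), is an injection from the set of all-distinct partitions of n with odd parts above even parts into the set of all-distinct partitions of n with even parts above odd parts. -/
/-!
Sorted increasingly, a partition with odd parts above even parts is its even parts followed by
its odd parts. Cut this list as `X ++ Y ++ Z` with `|X| = |Z| = m`: then `X` is even, `Z` is odd
and `Y` lies in one parity class. As the parts are distinct and positive, `X - 1, Y, Z + 1` is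
still strictly increasing, now with all odd parts before all even ones, and it has exactly as many
odd (and even) parts as `λ` because `|X| = |Z|`. Hence `m`, and with it the cut, can be read off
`φ(λ)`, and shifting the outer blocks back recovers `λ`.
-/

def shiftEnds (L : List ℕ) (m : ℕ) : List ℕ :=
  (L.take m).map (fun x => x - 1) ++
    (L.drop (L.length - m)).map (fun x => x + 1) ++
    (L.drop m).take (L.length - 2 * m)

def shiftOuter (X Y Z : List ℕ) : List ℕ :=
  X.map (· - 1) ++ Y ++ Z.map (· + 1)

def parityMin (s : Multiset ℕ) : ℕ :=
  min (Multiset.card (s.filter (fun a => Odd a))) (Multiset.card (s.filter (fun a => Even a)))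

/-- `φ` on multisets of parts; one-parity partitions need no special case since then
`parityMin s = 0` and `shiftEnds L 0 = L`. -/
def shiftParts (s : Multiset ℕ) : Multiset ℕ :=
  ↑(shiftEnds (s.sort (· ≤ ·)) (parityMin s))

theorem shiftEnds_zero (L : List ℕ) : shiftEnds L 0 = L := by
  simp [shiftEnds]

theorem shiftEnds_append_perm {X Y Z : List ℕ} {m : ℕ} (hX : X.length = m)
    (hZ : Z.length = m) : (shiftEnds (X ++ Y ++ Z) m).Perm (shiftOuter X Y Z) := by
  subst hX
  have hlastIdx : (X ++ Y ++ Z).length - X.length = (X ++ Y).length := by simp; omega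
  have hmidLen : (X ++ Y ++ Z).length - 2 * X.length = Y.length := by simp; omega
  have hfirst : (X ++ Y ++ Z).take X.length = X := by simp
  have hlast : (X ++ Y ++ Z).drop (X ++ Y).length = Z := List.drop_left
  have hmid : ((X ++ Y ++ Z).drop X.length).take Y.length = Y := by simp
  rw [shiftEnds, hlastIdx, hmidLen, hfirst, hmid, hlast, shiftOuter, List.append_assoc,
    List.append_assoc]
  exact List.Perm.append_left _ List.perm_append_comm

theorem List.exists_append_eq_balanced_split {α : Type*} (E O : List α) :
    ∃ X Y Z : List α, E ++ O = X ++ Y ++ Z ∧ X.length = min E.length O.length ∧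
      Z.length = min E.length O.length ∧ X ⊆ E ∧ Z ⊆ O ∧ (Y ⊆ E ∨ Y ⊆ O) := by
  rcases le_total E.length O.length with h | h
  · exact ⟨E, O.take (O.length - E.length), O.drop (O.length - E.length), by simp, by simp [h],
      by simp; omega, List.Subset.refl _, List.drop_subset _ _, Or.inr (List.take_subset _ _)⟩
  · exact ⟨E.take O.length, E.drop O.length, O, by simp, by simp [h], by simp [h],
      List.take_subset _ _, List.Subset.refl _, Or.inl (List.drop_subset _ _)⟩

section ShiftOuter

variable {X Y Z : List ℕ}

theorem map_add_one_map_sub_one (hX : ∀ x ∈ X, 0 < x) : (X.map (· - 1)).map (· + 1) = X := by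
  rw [List.map_map]
  exact (List.map_congr_left fun x hx => Nat.sub_add_cancel (hX x hx)).trans (List.map_id X)

theorem pairwise_lt_shiftOuter (h : (X ++ Y ++ Z).Pairwise (· < ·)) (hX : ∀ x ∈ X, 0 < x) :
    (shiftOuter X Y Z).Pairwise (· < ·) := by
  simp only [shiftOuter, List.pairwise_append, List.pairwise_map, List.mem_append,
    List.mem_map] at h ⊢
  obtain ⟨⟨hXX, hYY, hXY⟩, hZZ, hXYZ⟩ := h
  refine ⟨⟨hXX.imp_of_mem fun ha _ hab => by have := hX _ ha; omega, hYY, ?_⟩,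
    hZZ.imp fun hab => by omega, ?_⟩
  · rintro _ ⟨x, hx, rfl⟩ y hy
    have := hXY x hx y hy
    omega
  · rintro _ (⟨x, hx, rfl⟩ | hy) _ ⟨z, hz, rfl⟩
    · have := hXYZ x (Or.inl hx) z hz
      omega
    · have := hXYZ _ (Or.inr hy) z hz
      omega

theorem sum_shiftOuter (hX : ∀ x ∈ X, 0 < x) (hlen : X.length = Z.length) :
    (shiftOuter X Y Z).sum = (X ++ Y ++ Z).sum := by
  have hXsum := congrArg List.sum (map_add_one_map_sub_one hX)
  simp only [shiftOuter, List.sum_append, List.sum_map_add, List.map_id', List.map_const',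
    List.sum_replicate, List.length_map, smul_eq_mul, mul_one] at hXsum ⊢
  omega

theorem odd_of_mem_map_sub_one (hXpos : ∀ x ∈ X, 0 < x) (hXeven : ∀ x ∈ X, Even x) :
    ∀ x ∈ X.map (· - 1), Odd x := by
  simp only [List.mem_map]
  rintro _ ⟨x, hx, rfl⟩
  exact Nat.Even.sub_odd (hXpos x hx) (hXeven x hx) odd_one

theorem even_of_mem_map_add_one (hZodd : ∀ z ∈ Z, Odd z) : ∀ z ∈ Z.map (· + 1), Even z := by
  simp only [List.mem_map]
  rintro _ ⟨z, hz, rfl⟩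
  exact (hZodd z hz).add_one

theorem parityMin_shiftOuter (hXpos : ∀ x ∈ X, 0 < x) (hXeven : ∀ x ∈ X, Even x)
    (hZodd : ∀ z ∈ Z, Odd z) (hlen : X.length = Z.length) :
    parityMin (shiftOuter X Y Z : List ℕ) = parityMin (X ++ Y ++ Z : List ℕ) := by
  have hall : ∀ (p : ℕ → Prop) [DecidablePred p] (l : List ℕ), (∀ x ∈ l, p x) →
      Multiset.card ((l : Multiset ℕ).filter p) = l.length := fun p _ l h => by
    rw [Multiset.filter_eq_self.mpr fun x hx => h x (Multiset.mem_coe.mp hx), Multiset.coe_card]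
  have hnone : ∀ (p : ℕ → Prop) [DecidablePred p] (l : List ℕ), (∀ x ∈ l, ¬p x) →
      Multiset.card ((l : Multiset ℕ).filter p) = 0 := fun p _ l h => by
    rw [Multiset.filter_eq_nil.mpr fun x hx => h x (Multiset.mem_coe.mp hx), Multiset.card_zero]
  have hX' := odd_of_mem_map_sub_one hXpos hXeven
  have hZ' := even_of_mem_map_add_one hZodd
  simp only [shiftOuter, parityMin, ← Multiset.coe_add, Multiset.filter_add, Multiset.card_add]
  rw [hall _ _ hX', hall _ _ hZ', hall _ _ hXeven, hall _ _ hZodd,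
    hnone _ _ fun x hx => Nat.not_odd_iff_even.mpr (hXeven x hx),
    hnone _ _ fun z hz => Nat.not_even_iff_odd.mpr (hZodd z hz),
    hnone _ _ fun x hx => Nat.not_even_iff_odd.mpr (hX' x hx),
    hnone _ _ fun z hz => Nat.not_odd_iff_even.mpr (hZ' z hz), List.length_map, List.length_map]
  omega

end ShiftOuter

theorem evenAbove_coe_append {P Q : List ℕ} (h : (P ++ Q).Pairwise (· < ·))
    (hP : ∀ x ∈ P, Odd x) (hQ : ∀ x ∈ Q, Even x) : evenAbove ↑(P ++ Q) := by
  intro a ha b hb hae hbo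
  rw [Multiset.mem_coe, List.mem_append] at ha hb
  have haQ : a ∈ Q := ha.resolve_left fun haP => Nat.not_even_iff_odd.mpr (hP a haP) hae
  have hbP : b ∈ P := hb.resolve_right fun hbQ => Nat.not_even_iff_odd.mpr hbo (hQ b hbQ)
  exact (List.pairwise_append.mp h).2.2 b hbP a haQ

theorem List.Pairwise.lt_of_coe_nodup {α : Type*} [PartialOrder α] {L : List α}
    (h : L.Pairwise (· ≤ ·)) (hL : (L : Multiset α).Nodup) : L.Pairwise (· < ·) :=
  (h.sortedLE.sortedLT_of_nodup (Multiset.coe_nodup.mp hL)).pairwise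

section ShiftParts

variable {s : Multiset ℕ}

theorem sort_eq_sort_filter_even_append (h : oddAbove s) :
    s.sort (· ≤ ·) =
      (s.filter (fun a => Even a)).sort (· ≤ ·) ++ (s.filter (fun a => Odd a)).sort (· ≤ ·) := by
  refine List.Perm.eq_of_pairwise' (Multiset.pairwise_sort _ _) ?_ (Multiset.coe_eq_coe.mp ?_)
  · refine List.pairwise_append.mpr ⟨Multiset.pairwise_sort _ _, Multiset.pairwise_sort _ _, ?_⟩
    intro a ha b hb
    simp only [Multiset.mem_sort, Multiset.mem_filter] at ha hb
    exact (h b hb.1 a ha.1 hb.2 ha.2).le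
  · simp only [← Multiset.coe_add, Multiset.sort_eq]
    simp_rw [← Nat.not_even_iff_odd]
    exact (Multiset.filter_add_not _ s).symm

theorem exists_sort_eq_split (h : oddAbove s) :
    ∃ X Y Z : List ℕ, s.sort (· ≤ ·) = X ++ Y ++ Z ∧ X.length = parityMin s ∧
      Z.length = parityMin s ∧ (∀ x ∈ X, Even x) ∧ (∀ z ∈ Z, Odd z) ∧
      ((∀ y ∈ Y, Even y) ∨ ∀ y ∈ Y, Odd y) := by
  set E := (s.filter (fun a => Even a)).sort (· ≤ ·)
  set O := (s.filter (fun a => Odd a)).sort (· ≤ ·)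
  have hE : ∀ x ∈ E, Even x := fun x hx => (Multiset.mem_filter.mp ((Multiset.mem_sort _).mp hx)).2
  have hO : ∀ x ∈ O, Odd x := fun x hx => (Multiset.mem_filter.mp ((Multiset.mem_sort _).mp hx)).2
  have hmin : min E.length O.length = parityMin s := by
    simp only [E, O, Multiset.length_sort, parityMin, min_comm]
  obtain ⟨X, Y, Z, hsplit, hX, hZ, hXE, hZO, hY⟩ := List.exists_append_eq_balanced_split E O
  refine ⟨X, Y, Z, (sort_eq_sort_filter_even_append h).trans hsplit, hmin ▸ hX, hmin ▸ hZ,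
    fun x hx => hE x (hXE hx), fun z hz => hO z (hZO hz), ?_⟩
  exact hY.imp (fun hY y hy => hE y (hY hy)) (fun hY y hy => hO y (hY hy))

theorem exists_shiftParts_eq (ho : oddAbove s) (hpos : ∀ x ∈ s, 0 < x) :
    ∃ X Y Z : List ℕ, s = ↑(X ++ Y ++ Z) ∧ (X ++ Y ++ Z).Pairwise (· ≤ ·) ∧
      shiftParts s = ↑(shiftOuter X Y Z) ∧ X.length = parityMin s ∧ X.length = Z.length ∧
      (∀ x ∈ X, 0 < x) ∧ (∀ x ∈ X, Even x) ∧ (∀ z ∈ Z, Odd z) ∧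
      ((∀ y ∈ Y, Even y) ∨ ∀ y ∈ Y, Odd y) := by
  obtain ⟨X, Y, Z, hsort, hX, hZ, hXeven, hZodd, hY⟩ := exists_sort_eq_split ho
  refine ⟨X, Y, Z, by rw [← hsort, Multiset.sort_eq], hsort ▸ Multiset.pairwise_sort s _,
    Multiset.coe_eq_coe.mpr (hsort ▸ shiftEnds_append_perm hX hZ), hX, hX.trans hZ.symm,
    fun x hx => hpos x ?_, hXeven, hZodd, hY⟩
  rw [← Multiset.mem_sort (· ≤ ·), hsort]
  simp [hx]

theorem shiftParts_eq_self (h : (∀ a ∈ s, Odd a) ∨ (∀ a ∈ s, Even a)) : shiftParts s = s := by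
  have hmin : parityMin s = 0 := by
    rcases h with h | h
    · rw [parityMin, Multiset.filter_eq_nil.mpr fun a ha => Nat.not_even_iff_odd.mpr (h a ha)]
      simp
    · rw [parityMin, Multiset.filter_eq_nil.mpr fun a ha => Nat.not_odd_iff_even.mpr (h a ha)]
      simp
  rw [shiftParts, hmin, shiftEnds_zero, Multiset.sort_eq]

theorem sum_shiftParts (ho : oddAbove s) (hpos : ∀ x ∈ s, 0 < x) :
    (shiftParts s).sum = s.sum := by
  obtain ⟨X, Y, Z, rfl, -, hshift, -, hlen, hXpos, -⟩ := exists_shiftParts_eq ho hpos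
  rw [hshift, Multiset.sum_coe, Multiset.sum_coe, sum_shiftOuter hXpos hlen]

theorem pos_of_mem_shiftParts (ho : oddAbove s) (hpos : ∀ x ∈ s, 0 < x) :
    ∀ x ∈ shiftParts s, 0 < x := by
  obtain ⟨X, Y, Z, rfl, -, hshift, -, -, hXpos, hXeven, -⟩ := exists_shiftParts_eq ho hpos
  rw [hshift]
  simp only [shiftOuter, Multiset.mem_coe, List.mem_append]
  rintro x ((hx | hy) | hz)
  · exact (odd_of_mem_map_sub_one hXpos hXeven x hx).pos
  · exact hpos x (by simp [hy])
  · obtain ⟨z, -, rfl⟩ := List.mem_map.mp hz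
    exact z.succ_pos

theorem nodup_shiftParts (hs : s.Nodup) (ho : oddAbove s) (hpos : ∀ x ∈ s, 0 < x) :
    (shiftParts s).Nodup := by
  obtain ⟨X, Y, Z, rfl, hsorted, hshift, -, -, hXpos, -⟩ := exists_shiftParts_eq ho hpos
  rw [hshift, Multiset.coe_nodup]
  exact (pairwise_lt_shiftOuter (hsorted.lt_of_coe_nodup hs) hXpos).nodup

theorem evenAbove_shiftParts (hs : s.Nodup) (ho : oddAbove s) (hpos : ∀ x ∈ s, 0 < x) :
    evenAbove (shiftParts s) := by
  obtain ⟨X, Y, Z, rfl, hsorted, hshift, -, -, hXpos, hXeven, hZodd, hY⟩ :=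
    exists_shiftParts_eq ho hpos
  have hX' := odd_of_mem_map_sub_one hXpos hXeven
  have hZ' := even_of_mem_map_add_one hZodd
  have hsorted' := pairwise_lt_shiftOuter (hsorted.lt_of_coe_nodup hs) hXpos
  rw [hshift]
  unfold shiftOuter at hsorted' ⊢
  rcases hY with hY | hY
  · rw [List.append_assoc] at hsorted' ⊢
    exact evenAbove_coe_append hsorted' hX' fun x hx =>
      (List.mem_append.mp hx).elim (hY x) (hZ' x)
  · exact evenAbove_coe_append hsorted'
      (fun x hx => (List.mem_append.mp hx).elim (hX' x) (hY x)) hZ'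

theorem shiftParts_injOn :
    Set.InjOn shiftParts {s | s.Nodup ∧ oddAbove s ∧ ∀ x ∈ s, 0 < x} := by
  rintro s ⟨hs, ho, hpos⟩ t ⟨ht, ho', hpos'⟩ hst
  obtain ⟨X, Y, Z, rfl, hsorted, hshift, hm, hlen, hXpos, hXeven, hZodd, -⟩ :=
    exists_shiftParts_eq ho hpos
  obtain ⟨X', Y', Z', rfl, hsorted', hshift', hm', hlen', hXpos', hXeven', hZodd', -⟩ :=
    exists_shiftParts_eq ho' hpos'
  have hmX : X.length = X'.length := by
    rw [hm, hm', ← parityMin_shiftOuter hXpos hXeven hZodd hlen,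
      ← parityMin_shiftOuter hXpos' hXeven' hZodd' hlen', ← hshift, ← hshift', hst]
  have hS : shiftOuter X Y Z = shiftOuter X' Y' Z' :=
    (pairwise_lt_shiftOuter (hsorted.lt_of_coe_nodup hs) hXpos).eq_of_mem_iff
      (pairwise_lt_shiftOuter (hsorted'.lt_of_coe_nodup ht) hXpos') fun a => by
        rw [← Multiset.mem_coe, ← hshift, hst, hshift', Multiset.mem_coe]
  have hSlen := congrArg List.length hS
  simp only [shiftOuter, List.length_append, List.length_map] at hS hSlen
  obtain ⟨hXY, hZ⟩ := List.append_inj hS (by simp; omega)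
  obtain ⟨hX, hY⟩ := List.append_inj hXY (by simpa using hmX)
  rw [← map_add_one_map_sub_one hXpos, hX, map_add_one_map_sub_one hXpos', hY,
    List.map_injective_iff.mpr (add_left_injective 1) hZ]

end ShiftParts

def shiftPartition {n : ℕ} (p : {p : Nat.Partition n // p.parts.Nodup ∧ oddAbove p.parts}) :
    {p : Nat.Partition n // p.parts.Nodup ∧ evenAbove p.parts} :=
  have hpos : ∀ x ∈ p.1.parts, 0 < x := fun _ hx => p.1.parts_pos hx
  ⟨⟨shiftParts p.1.parts, fun hx => pos_of_mem_shiftParts p.2.2 hpos _ hx,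
      (sum_shiftParts p.2.2 hpos).trans p.1.parts_sum⟩,
    nodup_shiftParts p.2.1 p.2.2 hpos, evenAbove_shiftParts p.2.1 p.2.2 hpos⟩

theorem stmt14 (n : ℕ) :
    ∃ f : {p : Nat.Partition n // p.parts.Nodup ∧ oddAbove p.parts} →
        {p : Nat.Partition n // p.parts.Nodup ∧ evenAbove p.parts},
      Function.Injective f ∧
        ∀ p : {p : Nat.Partition n // p.parts.Nodup ∧ oddAbove p.parts},
          (((∀ a ∈ p.1.parts, Odd a) ∨ (∀ a ∈ p.1.parts, Even a)) →
              (f p).1.parts = p.1.parts) ∧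
          (((∃ a ∈ p.1.parts, Odd a) ∧ (∃ b ∈ p.1.parts, Even b)) →
            ∀ m : ℕ,
              m = min (Multiset.card (p.1.parts.filter (fun a => Odd a)))
                    (Multiset.card (p.1.parts.filter (fun a => Even a))) →
              ∀ L : List ℕ, L = Multiset.sort p.1.parts (· ≤ ·) →
                (f p).1.parts =
                  ((L.take m).map (fun x => x - 1) ++
                    (L.drop (L.length - m)).map (fun x => x + 1) ++
                    (L.drop m).take (L.length - 2 * m) : List ℕ)) := by
  refine ⟨shiftPartition, fun p q hpq => ?_, fun p => ⟨shiftParts_eq_self, ?_⟩⟩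
  · have hparts : shiftParts p.1.parts = shiftParts q.1.parts := congrArg (·.1.parts) hpq
    exact Subtype.ext (Nat.Partition.ext (shiftParts_injOn
      ⟨p.2.1, p.2.2, fun _ => p.1.parts_pos⟩ ⟨q.2.1, q.2.2, fun _ => q.1.parts_pos⟩ hparts))
  · rintro - m rfl L rfl
    rfl
end
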